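/- arXiv:1710.11616 — 8 statements merged into one kernel-verified Lean document; each statement's English description precedes it below -/
import Mathlib

section
/- Let A be a bounded subset of ℝ^m, let ν be a probability measure on A, and let G, H : A → [0,∞) be bounded measurable potentials with ν(G) > 0 and ν(H) > 0. Then W₁(Ψ_G(ν), Ψ_H(ν)) ≤ (2·diam(A)/ν(G)) · ∫_A |H − G| dν. -/
open MeasureTheory

/-- Kantorovich–Rubinstein (Wasserstein-1) distance: infimum over couplings of
`∫ dist x y dπ`. -/
noncomputable def W1 {X : Type*} [MeasurableSpace X] [PseudoMetricSpace X]
    (μ ν : Measure X) : ℝ :=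
  sInf {r : ℝ | ∃ π : Measure (X × X),
    π.map Prod.fst = μ ∧ π.map Prod.snd = ν ∧ r = ∫ p, dist p.1 p.2 ∂π}

/-- Boltzmann–Gibbs transformation `Ψ_G(η)(dx) = G(x) η(dx) / η(G)` of a measure
concentrated on `A`. -/
noncomputable def BoltzmannGibbs {X : Type*} [MeasurableSpace X]
    (A : Set X) (η : Measure X) (G : X → ℝ) : Measure X :=
  (ENNReal.ofReal (∫ x in A, G x ∂η))⁻¹ •
    (η.restrict A).withDensity (fun x => ENNReal.ofReal (G x))

/-!
Write `Ψ_G(ν)` and `Ψ_H(ν)` as densities `f = G / ν(G)` and `g = H / ν(H)` with respect to `ν`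
restricted to `A`. Leaving the common part `min f g` in place and coupling the excesses
`(f - g)₊` and `(g - f)₊` independently moves a mass `ε = ∫ (f - g)₊` by at most `diam A`, so
`W₁ ≤ diam A · ε`. Finally
`ε ≤ ∫ |f - g| ≤ (∫ |H - G| + |ν(H) - ν(G)|) / ν(G) ≤ 2 ∫ |H - G| / ν(G)`.
-/

open Set Metric
open scoped ENNReal

namespace MeasureTheory.Measure

variable {α β : Type*} [MeasurableSpace α] [MeasurableSpace β]

theorem inv_measure_univ_mul_smul_self (μ : Measure α) [IsFiniteMeasure μ] :
    ((μ univ)⁻¹ * μ univ) • μ = μ := by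
  rcases eq_or_ne μ 0 with rfl | hμ
  · exact smul_zero _
  · rw [ENNReal.inv_mul_cancel (measure_univ_ne_zero.2 hμ) (measure_ne_top μ univ), one_smul]

theorem map_fst_inv_smul_prod (μ : Measure α) (ν : Measure β) [IsFiniteMeasure μ]
    [IsFiniteMeasure ν] (h : μ univ = ν univ) :
    ((μ univ)⁻¹ • μ.prod ν).map Prod.fst = μ := by
  rw [Measure.map_smul, map_fst_prod, smul_smul, ← h, inv_measure_univ_mul_smul_self]

theorem map_snd_inv_smul_prod (μ : Measure α) (ν : Measure β) [IsFiniteMeasure μ]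
    [IsFiniteMeasure ν] (h : μ univ = ν univ) :
    ((μ univ)⁻¹ • μ.prod ν).map Prod.snd = ν := by
  rw [Measure.map_smul, map_snd_prod, smul_smul, h, inv_measure_univ_mul_smul_self]

end MeasureTheory.Measure

section W1

variable {X : Type*} [PseudoMetricSpace X] [MeasurableSpace X]

theorem W1_le_integral_dist {μ ν : Measure X} (π : Measure (X × X))
    (h₁ : π.map Prod.fst = μ) (h₂ : π.map Prod.snd = ν) :
    W1 μ ν ≤ ∫ p, dist p.1 p.2 ∂π :=
  csInf_le ⟨0, fun _ ⟨_, _, _, hr⟩ => hr ▸ integral_nonneg fun _ => dist_nonneg⟩ ⟨π, h₁, h₂, rfl⟩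

theorem ae_norm_dist_le_diam_prod {A : Set X} (hA : Bornology.IsBounded A) {μ ν : Measure X}
    [SFinite ν] (hμA : μ Aᶜ = 0) (hνA : ν Aᶜ = 0) :
    ∀ᵐ p ∂μ.prod ν, ‖dist p.1 p.2‖ ≤ diam A := by
  have hAA : μ.prod ν (A ×ˢ A)ᶜ = 0 := by
    rw [compl_prod_eq_union]
    exact measure_union_null (by rw [Measure.prod_prod, hμA, zero_mul])
      (by rw [Measure.prod_prod, hνA, mul_zero])
  filter_upwards [measure_eq_zero_iff_ae_notMem.1 hAA] with p hp
  rw [Real.norm_of_nonneg dist_nonneg]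
  exact dist_le_diam_of_mem hA (notMem_compl_iff.1 hp).1 (notMem_compl_iff.1 hp).2

theorem integral_dist_inv_smul_prod_le {A : Set X} (hA : Bornology.IsBounded A)
    {μ ν : Measure X} [IsFiniteMeasure μ] [IsFiniteMeasure ν] (hμA : μ Aᶜ = 0) (hνA : ν Aᶜ = 0)
    (h : μ univ = ν univ) :
    ∫ p, dist p.1 p.2 ∂((μ univ)⁻¹ • μ.prod ν) ≤ diam A * (μ univ).toReal := by
  have hmass : (μ.prod ν).real univ = (μ univ).toReal ^ 2 := by
    rw [measureReal_def, ← univ_prod_univ, Measure.prod_prod, ← h, ENNReal.toReal_mul, sq]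
  rw [integral_smul_measure, smul_eq_mul, ENNReal.toReal_inv]
  calc (μ univ).toReal⁻¹ * ∫ p, dist p.1 p.2 ∂μ.prod ν
      ≤ (μ univ).toReal⁻¹ * (diam A * (μ.prod ν).real univ) := by
        gcongr
        exact (le_abs_self _).trans
          (norm_integral_le_of_norm_le_const (ae_norm_dist_le_diam_prod hA hμA hνA))
    _ = (μ univ).toReal⁻¹ * (diam A * (μ univ).toReal ^ 2) := by rw [hmass]
    _ = diam A * ((μ univ).toReal⁻¹ * (μ univ).toReal * (μ univ).toReal) := by ring
    _ = diam A * (μ univ).toReal := by rw [inv_mul_mul_self]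

variable [OpensMeasurableSpace X] [SecondCountableTopology X]

theorem integral_dist_map_diag (μ : Measure X) :
    ∫ p, dist p.1 p.2 ∂μ.map (fun x => (x, x)) = 0 := by
  rw [integral_map (by fun_prop) (by fun_prop)]
  simp

theorem integrable_dist_map_diag (μ : Measure X) :
    Integrable (fun p : X × X => dist p.1 p.2) (μ.map fun x => (x, x)) := by
  rw [integrable_map_measure (by fun_prop) (by fun_prop)]
  simp [Function.comp_def]

theorem W1_add_le_diam_mul {A : Set X} (hA : Bornology.IsBounded A) (μ : Measure X)
    {σ τ : Measure X} [IsFiniteMeasure σ] [IsFiniteMeasure τ]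
    (hσA : σ Aᶜ = 0) (hτA : τ Aᶜ = 0) (hστ : σ univ = τ univ) :
    W1 (μ + σ) (μ + τ) ≤ diam A * (σ univ).toReal := by
  set π := μ.map (fun x => (x, x)) + (σ univ)⁻¹ • σ.prod τ
  have hfst : π.map Prod.fst = μ + σ := by
    rw [Measure.map_add _ _ measurable_fst, Measure.map_map measurable_fst (by fun_prop),
      Measure.map_fst_inv_smul_prod σ τ hστ]
    exact congrArg (· + σ) Measure.map_id
  have hsnd : π.map Prod.snd = μ + τ := by
    rw [Measure.map_add _ _ measurable_snd, Measure.map_map measurable_snd (by fun_prop),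
      Measure.map_snd_inv_smul_prod σ τ hστ]
    exact congrArg (· + τ) Measure.map_id
  have hint : Integrable (fun p : X × X => dist p.1 p.2) ((σ univ)⁻¹ • σ.prod τ) := by
    rcases eq_or_ne (σ univ) 0 with h0 | h0
    · simp [Measure.measure_univ_eq_zero.1 h0]
    · refine (integrable_smul_measure (ENNReal.inv_ne_zero.2 (measure_ne_top σ univ))
        (ENNReal.inv_ne_top.2 h0)).2 ?_
      exact .of_bound (by fun_prop) _ (ae_norm_dist_le_diam_prod hA hσA hτA)
  calc W1 (μ + σ) (μ + τ) ≤ ∫ p, dist p.1 p.2 ∂π := W1_le_integral_dist π hfst hsnd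
    _ = ∫ p, dist p.1 p.2 ∂((σ univ)⁻¹ • σ.prod τ) := by
      rw [integral_add_measure (integrable_dist_map_diag μ) hint, integral_dist_map_diag, zero_add]
    _ ≤ diam A * (σ univ).toReal := integral_dist_inv_smul_prod_le hA hσA hτA hστ

theorem W1_withDensity_le_diam_mul {A : Set X} (hA : Bornology.IsBounded A) {μ : Measure X}
    (hμA : μ Aᶜ = 0) {f g : X → ℝ≥0∞} (hf : Measurable f) (hg : Measurable g)
    (hfg : ∫⁻ x, f x ∂μ = ∫⁻ x, g x ∂μ) (hf_fin : ∫⁻ x, f x ∂μ ≠ ∞) :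
    W1 (μ.withDensity f) (μ.withDensity g) ≤ diam A * (∫⁻ x, f x - g x ∂μ).toReal := by
  set common := μ.withDensity fun x => min (f x) (g x)
  have hsplit : ∀ {u v : X → ℝ≥0∞}, Measurable u → Measurable v →
      μ.withDensity u = μ.withDensity (fun x => min (u x) (v x)) + μ.withDensity (u - v) := by
    intro u v hu hv
    rw [← withDensity_add_right _ (hu.sub hv)]
    congr 1
    funext x
    show u x = min (u x) (v x) + (u x - v x)
    rw [add_comm, tsub_add_min]
  have hf_eq : μ.withDensity f = common + μ.withDensity (f - g) := hsplit hf hg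
  have hg_eq : μ.withDensity g = common + μ.withDensity (g - f) := by
    simp_rw [hsplit hg hf, common, min_comm]
  have htotal : (common + μ.withDensity (f - g)) univ = (common + μ.withDensity (g - f)) univ := by
    simp only [← hf_eq, ← hg_eq, withDensity_apply _ MeasurableSet.univ, Measure.restrict_univ,
      hfg]
  have hf_fin' : μ.withDensity f univ ≠ ∞ := by
    rwa [withDensity_apply _ MeasurableSet.univ, Measure.restrict_univ]
  have hcommon_fin : common univ ≠ ∞ :=
    ne_top_of_le_ne_top hf_fin' (hf_eq ▸ Measure.le_add_right le_rfl univ)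
  have : IsFiniteMeasure (μ.withDensity (f - g)) :=
    ⟨(ne_top_of_le_ne_top hf_fin' (hf_eq ▸ Measure.le_add_left le_rfl univ)).lt_top⟩
  have hmass : μ.withDensity (f - g) univ = μ.withDensity (g - f) univ := by
    rwa [Measure.add_apply, Measure.add_apply, ENNReal.add_right_inj hcommon_fin] at htotal
  have : IsFiniteMeasure (μ.withDensity (g - f)) := ⟨hmass ▸ measure_lt_top _ univ⟩
  calc W1 (μ.withDensity f) (μ.withDensity g)
      = W1 (common + μ.withDensity (f - g)) (common + μ.withDensity (g - f)) := by
        rw [← hf_eq, ← hg_eq]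
    _ ≤ diam A * (μ.withDensity (f - g) univ).toReal :=
      W1_add_le_diam_mul hA common (withDensity_absolutelyContinuous μ _ hμA)
        (withDensity_absolutelyContinuous μ _ hμA) hmass
    _ = diam A * (∫⁻ x, f x - g x ∂μ).toReal := by
      rw [withDensity_apply _ MeasurableSet.univ, Measure.restrict_univ]
      rfl

end W1

section Densities

variable {α : Type*} [MeasurableSpace α] {μ : Measure α}

theorem lintegral_ofReal_sub_ofReal_le {f g : α → ℝ} (hfg : Integrable (fun x => f x - g x) μ) :
    ∫⁻ x, ENNReal.ofReal (f x) - ENNReal.ofReal (g x) ∂μ ≤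
      ENNReal.ofReal (∫ x, |f x - g x| ∂μ) := by
  rw [ofReal_integral_eq_lintegral_ofReal hfg.abs (ae_of_all _ fun _ => abs_nonneg _)]
  refine lintegral_mono fun x => tsub_le_iff_right.2 ?_
  calc ENNReal.ofReal (f x) ≤ ENNReal.ofReal (|f x - g x| + g x) :=
        ENNReal.ofReal_le_ofReal (by linarith [le_abs_self (f x - g x)])
    _ ≤ ENNReal.ofReal |f x - g x| + ENNReal.ofReal (g x) := ENNReal.ofReal_add_le

theorem lintegral_ofReal_div_integral_self {G : α → ℝ} (hG : Integrable G μ) (hG0 : 0 ≤ᵐ[μ] G)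
    (hpos : ∫ x, G x ∂μ ≠ 0) :
    ∫⁻ x, ENNReal.ofReal (G x / ∫ x, G x ∂μ) ∂μ = 1 := by
  have hnonneg : 0 ≤ ∫ x, G x ∂μ := integral_nonneg_of_ae hG0
  rw [← ofReal_integral_eq_lintegral_ofReal (hG.div_const _)
      (hG0.mono fun x hx => div_nonneg hx hnonneg), integral_div, div_self hpos, ENNReal.ofReal_one]

theorem integral_abs_div_integral_sub_le {G H : α → ℝ} (hG : Integrable G μ) (hH : Integrable H μ)
    (hH0 : 0 ≤ᵐ[μ] H) (hpos : 0 < ∫ x, G x ∂μ) :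
    ∫ x, |G x / ∫ x, G x ∂μ - H x / ∫ x, H x ∂μ| ∂μ ≤
      2 / (∫ x, G x ∂μ) * ∫ x, |H x - G x| ∂μ := by
  set a := ∫ x, G x ∂μ
  set b := ∫ x, H x ∂μ
  set D := ∫ x, |H x - G x| ∂μ
  have hD_int : Integrable (fun x => |H x - G x|) μ := (hH.sub hG).abs
  have hb : 0 ≤ b := integral_nonneg_of_ae hH0
  have hpointwise : ∀ᵐ x ∂μ, |G x / a - H x / b| ≤ |H x - G x| / a + |a⁻¹ - b⁻¹| * H x := by
    filter_upwards [hH0] with x hx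
    calc |G x / a - H x / b| = |(G x - H x) / a + (a⁻¹ - b⁻¹) * H x| := by ring_nf
      _ ≤ |(G x - H x) / a| + |(a⁻¹ - b⁻¹) * H x| := abs_add_le _ _
      _ = |H x - G x| / a + |a⁻¹ - b⁻¹| * H x := by
        rw [abs_div, abs_of_pos hpos, abs_sub_comm, abs_mul, abs_of_nonneg hx]
  have hab : |b - a| ≤ D := by
    rw [← integral_sub hH hG]
    exact abs_integral_le_integral_abs
  have hscale : |a⁻¹ - b⁻¹| * b ≤ |b - a| / a := by
    rcases hb.eq_or_lt with hb0 | hb0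
    · rw [← hb0, mul_zero]
      positivity
    · refine le_of_eq ?_
      calc |a⁻¹ - b⁻¹| * b = |(a⁻¹ - b⁻¹) * b| := by rw [abs_mul, abs_of_nonneg hb]
        _ = |b - a| / a := by
          rw [show (a⁻¹ - b⁻¹) * b = (b - a) / a by field_simp, abs_div, abs_of_pos hpos]
  calc ∫ x, |G x / a - H x / b| ∂μ ≤ ∫ x, (|H x - G x| / a + |a⁻¹ - b⁻¹| * H x) ∂μ :=
        integral_mono_ae ((hG.div_const a).sub (hH.div_const b)).abs
          ((hD_int.div_const a).add (hH.const_mul _)) hpointwise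
    _ = D / a + |a⁻¹ - b⁻¹| * b := by
        rw [integral_add (hD_int.div_const a) (hH.const_mul _), integral_div,
          integral_const_mul]
    _ ≤ D / a + D / a := by gcongr; exact hscale.trans (by gcongr)
    _ = 2 / a * D := by ring

end Densities

theorem BoltzmannGibbs_eq_withDensity {X : Type*} [MeasurableSpace X] {A : Set X}
    {η : Measure X} {G : X → ℝ} (hG : Measurable G) (hpos : 0 < ∫ x in A, G x ∂η) :
    BoltzmannGibbs A η G =
      (η.restrict A).withDensity fun x => ENNReal.ofReal (G x / ∫ x in A, G x ∂η) := by
  rw [BoltzmannGibbs, ← withDensity_smul _ hG.ennreal_ofReal]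
  congr 1
  funext x
  rw [Pi.smul_apply, smul_eq_mul, ← ENNReal.ofReal_inv_of_pos hpos,
    ← ENNReal.ofReal_mul (inv_nonneg.2 hpos.le), inv_mul_eq_div]

theorem stmt_3_general {m : ℕ} (A : Set (EuclideanSpace ℝ (Fin m)))
    (hA : Bornology.IsBounded A) (hAmeas : MeasurableSet A)
    (ν : Measure (EuclideanSpace ℝ (Fin m))) [IsProbabilityMeasure ν]
    (G H : EuclideanSpace ℝ (Fin m) → ℝ)
    (hGmeas : Measurable G) (hHmeas : Measurable H)
    (hGnonneg : ∀ x ∈ A, 0 ≤ G x) (hHnonneg : ∀ x ∈ A, 0 ≤ H x)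
    (CG : ℝ) (hCG : ∀ x ∈ A, |G x| ≤ CG)
    (CH : ℝ) (hCH : ∀ x ∈ A, |H x| ≤ CH)
    (hνG : 0 < ∫ x in A, G x ∂ν) (hνH : 0 < ∫ x in A, H x ∂ν) :
    W1 (BoltzmannGibbs A ν G) (BoltzmannGibbs A ν H) ≤
      (2 * Metric.diam A / ∫ x in A, G x ∂ν) * ∫ x in A, |H x - G x| ∂ν := by
  have hνA : ν.restrict A Aᶜ = 0 := by
    rw [Measure.restrict_apply hAmeas.compl, compl_inter_self, measure_empty]
  have hGint : Integrable G (ν.restrict A) :=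
    .of_bound hGmeas.aestronglyMeasurable CG (ae_restrict_of_forall_mem hAmeas hCG)
  have hHint : Integrable H (ν.restrict A) :=
    .of_bound hHmeas.aestronglyMeasurable CH (ae_restrict_of_forall_mem hAmeas hCH)
  have hG0 : 0 ≤ᵐ[ν.restrict A] G := ae_restrict_of_forall_mem hAmeas hGnonneg
  have hH0 : 0 ≤ᵐ[ν.restrict A] H := ae_restrict_of_forall_mem hAmeas hHnonneg
  have hG_one := lintegral_ofReal_div_integral_self hGint hG0 hνG.ne'
  have hH_one := lintegral_ofReal_div_integral_self hHint hH0 hνH.ne'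
  rw [BoltzmannGibbs_eq_withDensity hGmeas hνG, BoltzmannGibbs_eq_withDensity hHmeas hνH]
  calc _ ≤ diam A * (∫⁻ x, ENNReal.ofReal (G x / ∫ x in A, G x ∂ν) -
        ENNReal.ofReal (H x / ∫ x in A, H x ∂ν) ∂ν.restrict A).toReal :=
        W1_withDensity_le_diam_mul hA hνA (by fun_prop) (by fun_prop) (hG_one.trans hH_one.symm)
          (hG_one ▸ ENNReal.one_ne_top)
    _ ≤ diam A * ∫ x in A, |G x / (∫ x in A, G x ∂ν) - H x / ∫ x in A, H x ∂ν| ∂ν := by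
        gcongr
        exact ENNReal.toReal_le_of_le_ofReal (integral_nonneg fun _ => abs_nonneg _)
          (lintegral_ofReal_sub_ofReal_le ((hGint.div_const _).sub (hHint.div_const _)))
    _ ≤ diam A * (2 / (∫ x in A, G x ∂ν) * ∫ x in A, |H x - G x| ∂ν) := by
        gcongr
        exact integral_abs_div_integral_sub_le hGint hHint hH0 hνG
    _ = _ := by ring

/-- modulus of continuity of `Ψ_·(ν)` with respect to the potential:
`W₁(Ψ_G(ν), Ψ_H(ν)) ≤ (2 diam(A) / ν(G)) ∫_A |H − G| dν`. -/
theorem stmt_3 {m : ℕ} (A : Set (EuclideanSpace ℝ (Fin m)))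
    (hA : Bornology.IsBounded A) (hAmeas : MeasurableSet A)
    (ν : Measure (EuclideanSpace ℝ (Fin m))) [IsProbabilityMeasure ν]
    (hν : ν Aᶜ = 0)
    (G H : EuclideanSpace ℝ (Fin m) → ℝ)
    (hGmeas : Measurable G) (hHmeas : Measurable H)
    (hGnonneg : ∀ x ∈ A, 0 ≤ G x) (hHnonneg : ∀ x ∈ A, 0 ≤ H x)
    (CG : ℝ) (hCG : ∀ x ∈ A, |G x| ≤ CG)
    (CH : ℝ) (hCH : ∀ x ∈ A, |H x| ≤ CH)
    (hνG : 0 < ∫ x in A, G x ∂ν) (hνH : 0 < ∫ x in A, H x ∂ν) :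
    W1 (BoltzmannGibbs A ν G) (BoltzmannGibbs A ν H) ≤
      (2 * Metric.diam A / ∫ x in A, G x ∂ν) * ∫ x in A, |H x - G x| ∂ν :=
  stmt_3_general A hA hAmeas ν G H hGmeas hHmeas hGnonneg hHnonneg CG hCG CH hCH hνG hνH
end

section
/- Let P be a compact hypercube in ℝ^m and let K : P × P → [0,∞) be a kernel with bandwidth h > 0 satisfying: (a) ∫_P K(x,y) dy = 1 for every x ∈ P; (b) K(x,y) = 0 whenever ‖x−y‖ > h; (c) for every x ∈ P the map y ↦ K(x,y) is Lipschitz with constant L. Let ξ be a probability measure on P with a Lipschitz density ρ with respect to Lebesgue measure, let ν̂ be any probability measure on P, and set p̃(x) = ∫_P K(x,y) dν̂(y). Then for every x ∈ P, |p̃(x) − ρ(x)| ≤ L · W₁(ν̂, ξ) + h · ‖ρ‖_Lip. -/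
open MeasureTheory

section Aux

variable {m : ℕ} {P : Set (EuclideanSpace ℝ (Fin m))}

lemma aux_coupling_bound (hPm : MeasurableSet P) (hPb : Bornology.IsBounded P)
    {f : EuclideanSpace ℝ (Fin m) → ℝ} {L : NNReal} (hf : LipschitzOnWith L f P)
    {μ ν : Measure (EuclideanSpace ℝ (Fin m))}
    (hμ : μ Pᶜ = 0) (hν : ν Pᶜ = 0)
    (hfi : Integrable f μ) (hfi' : Integrable f ν)
    {π : Measure ((EuclideanSpace ℝ (Fin m)) × (EuclideanSpace ℝ (Fin m)))}
    [IsFiniteMeasure π]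
    (h1 : π.map Prod.fst = μ) (h2 : π.map Prod.snd = ν) :
    |∫ y, f y ∂μ - ∫ y, f y ∂ν| ≤ (L : ℝ) * ∫ p, dist p.1 p.2 ∂π := by
  have hae1 : ∀ᵐ p ∂π, p.1 ∈ P := by
    rw [ae_iff]
    have : {p : (EuclideanSpace ℝ (Fin m)) × (EuclideanSpace ℝ (Fin m)) | ¬ p.1 ∈ P}
        = Prod.fst ⁻¹' Pᶜ := rfl
    rw [this, ← Measure.map_apply measurable_fst hPm.compl, h1, hμ]
  have hae2 : ∀ᵐ p ∂π, p.2 ∈ P := by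
    rw [ae_iff]
    have : {p : (EuclideanSpace ℝ (Fin m)) × (EuclideanSpace ℝ (Fin m)) | ¬ p.2 ∈ P}
        = Prod.snd ⁻¹' Pᶜ := rfl
    rw [this, ← Measure.map_apply measurable_snd hPm.compl, h2, hν]
  have hI1 : Integrable (fun p : (EuclideanSpace ℝ (Fin m)) × _ => f p.1) π := by
    rw [← h1] at hfi
    exact (integrable_map_measure hfi.1 measurable_fst.aemeasurable).mp hfi
  have hI2 : Integrable (fun p : (EuclideanSpace ℝ (Fin m)) × _ => f p.2) π := by
    rw [← h2] at hfi'
    exact (integrable_map_measure hfi'.1 measurable_snd.aemeasurable).mp hfi'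
  have hdist : Integrable (fun p : (EuclideanSpace ℝ (Fin m)) × _ => dist p.1 p.2) π := by
    refine ⟨(continuous_fst.dist continuous_snd).aestronglyMeasurable, ?_⟩
    apply HasFiniteIntegral.of_bounded (C := Metric.diam P)
    filter_upwards [hae1, hae2] with p hp1 hp2
    rw [Real.norm_eq_abs, abs_of_nonneg dist_nonneg]
    exact Metric.dist_le_diam_of_mem hPb hp1 hp2
  have heq : ∫ y, f y ∂μ - ∫ y, f y ∂ν = ∫ p, (f p.1 - f p.2) ∂π := by
    rw [← h1] at hfi ⊢
    rw [← h2] at hfi' ⊢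
    rw [integral_map measurable_fst.aemeasurable hfi.1,
      integral_map measurable_snd.aemeasurable hfi'.1, ← integral_sub hI1 hI2]
  rw [heq]
  calc |∫ p, (f p.1 - f p.2) ∂π| ≤ ∫ p, |f p.1 - f p.2| ∂π := by
        have := norm_integral_le_integral_norm (μ := π)
          (fun p : (EuclideanSpace ℝ (Fin m)) × (EuclideanSpace ℝ (Fin m)) => f p.1 - f p.2)
        simpa [Real.norm_eq_abs] using this
    _ ≤ ∫ p, (L : ℝ) * dist p.1 p.2 ∂π := by
        refine integral_mono_ae ((hI1.sub hI2).abs) (hdist.const_mul _) ?_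
        filter_upwards [hae1, hae2] with p hp1 hp2
        have := hf.dist_le_mul p.1 hp1 p.2 hp2
        rwa [Real.dist_eq] at this
    _ = (L : ℝ) * ∫ p, dist p.1 p.2 ∂π := integral_const_mul _ _

lemma aux_W1_bound (hPm : MeasurableSet P) (hPb : Bornology.IsBounded P)
    {f : EuclideanSpace ℝ (Fin m) → ℝ} {L : NNReal} (hf : LipschitzOnWith L f P)
    {μ ν : Measure (EuclideanSpace ℝ (Fin m))}
    [IsProbabilityMeasure μ] [IsProbabilityMeasure ν]
    (hμ : μ Pᶜ = 0) (hν : ν Pᶜ = 0)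
    (hfi : Integrable f μ) (hfi' : Integrable f ν) :
    |∫ y, f y ∂μ - ∫ y, f y ∂ν| ≤ (L : ℝ) * W1 μ ν := by
  set S := {r : ℝ | ∃ π : Measure ((EuclideanSpace ℝ (Fin m)) × (EuclideanSpace ℝ (Fin m))),
    π.map Prod.fst = μ ∧ π.map Prod.snd = ν ∧ r = ∫ p, dist p.1 p.2 ∂π} with hS
  have hmem : ∀ r ∈ S, |∫ y, f y ∂μ - ∫ y, f y ∂ν| ≤ (L : ℝ) * r := by
    rintro r ⟨π, hπ1, hπ2, rfl⟩
    have : IsFiniteMeasure π := by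
      constructor
      have : π.map Prod.fst Set.univ = π Set.univ := by
        rw [Measure.map_apply measurable_fst MeasurableSet.univ, Set.preimage_univ]
      rw [← this, hπ1]
      simp
    exact aux_coupling_bound hPm hPb hf hμ hν hfi hfi' hπ1 hπ2
  have hne : S.Nonempty := by
    refine ⟨∫ p, dist p.1 p.2 ∂(μ.prod ν), μ.prod ν, ?_, ?_, rfl⟩
    · simp
    · simp
  rcases eq_or_lt_of_le (NNReal.coe_nonneg L) with hL | hL
  · obtain ⟨r₀, hr₀⟩ := hne
    have h0 := hmem _ hr₀
    rw [← hL] at h0 ⊢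
    simpa using h0
  · have hW : (|∫ y, f y ∂μ - ∫ y, f y ∂ν|) / (L : ℝ) ≤ W1 μ ν := by
      refine le_csInf hne fun r hr => ?_
      rw [div_le_iff₀ hL]
      rw [mul_comm]
      exact hmem r hr
    calc |∫ y, f y ∂μ - ∫ y, f y ∂ν|
        = (L : ℝ) * ((|∫ y, f y ∂μ - ∫ y, f y ∂ν|) / (L : ℝ)) := by
          field_simp
      _ ≤ (L : ℝ) * W1 μ ν := by
          exact mul_le_mul_of_nonneg_left hW (le_of_lt hL)

end Aux

/-- pointwise bound for the smoothed density:
for every `x ∈ P`, `|p̃(x) − ρ(x)| ≤ L·W₁(ν̂, ξ) + h·‖ρ‖_Lip`. -/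
theorem stmt_4 {m : ℕ} (a b : Fin m → ℝ) (hab : ∀ i, a i ≤ b i)
    (P : Set (EuclideanSpace ℝ (Fin m)))
    (hP : P = {x : EuclideanSpace ℝ (Fin m) | ∀ i, a i ≤ x i ∧ x i ≤ b i})
    (h : ℝ) (hh : 0 < h)
    (K : EuclideanSpace ℝ (Fin m) → EuclideanSpace ℝ (Fin m) → ℝ)
    (hKnonneg : ∀ x ∈ P, ∀ y ∈ P, 0 ≤ K x y)
    (hKint : ∀ x ∈ P, ∫ y in P, K x y ∂volume = 1)
    (hKsupp : ∀ x ∈ P, ∀ y ∈ P, h < dist x y → K x y = 0)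
    (L : NNReal) (hKLip : ∀ x ∈ P, LipschitzOnWith L (fun y => K x y) P)
    (ρ : EuclideanSpace ℝ (Fin m) → ℝ) (hρnonneg : ∀ x ∈ P, 0 ≤ ρ x)
    (Lρ : NNReal) (hρLip : LipschitzOnWith Lρ ρ P)
    (ξ : Measure (EuclideanSpace ℝ (Fin m))) [IsProbabilityMeasure ξ]
    (hξ : ξ = (volume.restrict P).withDensity (fun x => ENNReal.ofReal (ρ x)))
    (νhat : Measure (EuclideanSpace ℝ (Fin m))) [IsProbabilityMeasure νhat]
    (hνhat : νhat Pᶜ = 0) :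
    ∀ x ∈ P, |(∫ y in P, K x y ∂νhat) - ρ x| ≤ (L : ℝ) * W1 νhat ξ + h * (Lρ : ℝ) := by
  intro x hx
  have hPc : IsCompact P := by
    rw [hP]
    have he : {x : EuclideanSpace ℝ (Fin m) | ∀ i, a i ≤ x i ∧ x i ≤ b i}
        = (EuclideanSpace.equiv (Fin m) ℝ).symm '' (Set.univ.pi fun i => Set.Icc (a i) (b i)) := by
      ext z
      simp only [Set.mem_setOf_eq, Set.mem_image, Set.mem_pi, Set.mem_univ, Set.mem_Icc,
        forall_true_left]
      constructor
      · intro hz; exact ⟨fun i => z i, fun i => hz i, rfl⟩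
      · rintro ⟨y, hy, rfl⟩; exact fun i => hy i
    rw [he]
    exact (isCompact_univ_pi fun i => isCompact_Icc).image
      (EuclideanSpace.equiv (Fin m) ℝ).symm.continuous
  have hPm : MeasurableSet P := hPc.isClosed.measurableSet
  have hPb : Bornology.IsBounded P := hPc.isBounded
  have hξ0 : ξ Pᶜ = 0 := by
    rw [hξ, withDensity_apply _ hPm.compl, Measure.restrict_restrict hPm.compl]
    simp
  have hνres : νhat.restrict P = νhat :=
    Measure.restrict_eq_self_of_ae_mem (by rw [ae_iff]; exact hνhat)
  have hξres : ξ.restrict P = ξ :=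
    Measure.restrict_eq_self_of_ae_mem (by rw [ae_iff]; exact hξ0)
  set f := fun y => K x y with hfdef
  have hfLip : LipschitzOnWith L f P := hKLip x hx
  have hfcont : ContinuousOn f P := hfLip.continuousOn
  have hfbound : ∀ y ∈ P, ‖f y‖ ≤ (L : ℝ) * Metric.diam P + |f x| := by
    intro y hy
    have h1 : |f y - f x| ≤ (L : ℝ) * dist y x := by
      have := hfLip.dist_le_mul y hy x hx
      rwa [Real.dist_eq] at this
    have h2 : dist y x ≤ Metric.diam P := Metric.dist_le_diam_of_mem hPb hy hx
    have h3 : |f y| ≤ |f y - f x| + |f x| := by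
      calc |f y| = |(f y - f x) + f x| := by ring_nf
        _ ≤ |f y - f x| + |f x| := abs_add_le _ _
    rw [Real.norm_eq_abs]
    calc |f y| ≤ |f y - f x| + |f x| := h3
      _ ≤ (L : ℝ) * Metric.diam P + |f x| :=
        add_le_add (h1.trans (mul_le_mul_of_nonneg_left h2 (NNReal.coe_nonneg L))) le_rfl
  have hIν : Integrable f νhat := by
    refine ⟨?_, ?_⟩
    · rw [← hνres]; exact hfcont.aestronglyMeasurable hPm
    · apply HasFiniteIntegral.of_bounded (C := (L : ℝ) * Metric.diam P + |f x|)
      rw [← hνres]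
      filter_upwards [ae_restrict_mem hPm] with y hy using hfbound y hy
  have hIξ : Integrable f ξ := by
    refine ⟨?_, ?_⟩
    · rw [← hξres]; exact hfcont.aestronglyMeasurable hPm
    · apply HasFiniteIntegral.of_bounded (C := (L : ℝ) * Metric.diam P + |f x|)
      rw [← hξres]
      filter_upwards [ae_restrict_mem hPm] with y hy using hfbound y hy
  have hρcont : ContinuousOn ρ P := hρLip.continuousOn
  have hρm : AEMeasurable (fun y => (ρ y).toNNReal) (volume.restrict P) :=
    ((hρcont.aestronglyMeasurable hPm).aemeasurable).real_toNNReal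
  have hint1 : ∫ y, f y ∂ξ = ∫ y in P, ρ y * f y ∂volume := by
    rw [hξ]
    rw [show (fun x => ENNReal.ofReal (ρ x)) = (fun x => (((ρ x).toNNReal : NNReal) : ENNReal))
      from rfl]
    rw [integral_withDensity_eq_integral_smul₀ hρm f]
    refine integral_congr_ae ?_
    filter_upwards [ae_restrict_mem hPm] with y hy
    simp [NNReal.smul_def, Real.coe_toNNReal _ (hρnonneg y hy)]
  have hKIv : IntegrableOn f P volume := hfcont.integrableOn_compact' hPc hPm
  have hρIv : IntegrableOn (fun y => ρ y * f y) P volume :=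
    (hρcont.mul hfcont).integrableOn_compact' hPc hPm
  have hρx : ρ x = ∫ y in P, ρ x * f y ∂volume := by
    rw [integral_const_mul, hKint x hx, mul_one]
  have hterm2 : |∫ y, f y ∂ξ - ρ x| ≤ h * (Lρ : ℝ) := by
    rw [hint1]
    nth_rewrite 1 [hρx]
    rw [← integral_sub hρIv (hKIv.const_mul _)]
    have hptwise : ∀ y ∈ P, |ρ y * f y - ρ x * f y| ≤ (h * (Lρ : ℝ)) * f y := by
      intro y hy
      have hfnn : 0 ≤ f y := hKnonneg x hx y hy
      by_cases hd : dist x y ≤ h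
      · have h1 : |ρ y - ρ x| ≤ (Lρ : ℝ) * dist y x := by
          have := hρLip.dist_le_mul y hy x hx
          rwa [Real.dist_eq] at this
        have h2 : (Lρ : ℝ) * dist y x ≤ (Lρ : ℝ) * h := by
          rw [dist_comm]
          exact mul_le_mul_of_nonneg_left hd (NNReal.coe_nonneg Lρ)
        calc |ρ y * f y - ρ x * f y| = |ρ y - ρ x| * f y := by
              rw [← sub_mul, abs_mul, abs_of_nonneg hfnn]
          _ ≤ ((Lρ : ℝ) * h) * f y := mul_le_mul_of_nonneg_right (h1.trans h2) hfnn
          _ = (h * (Lρ : ℝ)) * f y := by ring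
      · have : f y = 0 := hKsupp x hx y hy (lt_of_not_ge hd)
        rw [this]
        simp
    calc |∫ y in P, (ρ y * f y - ρ x * f y) ∂volume|
        ≤ ∫ y in P, |ρ y * f y - ρ x * f y| ∂volume := by
          have := norm_integral_le_integral_norm (μ := volume.restrict P)
            (fun y => ρ y * f y - ρ x * f y)
          simpa [Real.norm_eq_abs] using this
      _ ≤ ∫ y in P, (h * (Lρ : ℝ)) * f y ∂volume := by
          refine integral_mono_ae ((hρIv.sub (hKIv.const_mul _)).abs) (hKIv.const_mul _) ?_
          filter_upwards [ae_restrict_mem hPm] with y hy using hptwise y hy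
      _ = h * (Lρ : ℝ) := by rw [integral_const_mul, hKint x hx, mul_one]
  have hterm1 : |∫ y, f y ∂νhat - ∫ y, f y ∂ξ| ≤ (L : ℝ) * W1 νhat ξ :=
    aux_W1_bound hPm hPb hfLip hνhat hξ0 hIν hIξ
  have hset : ∫ y in P, K x y ∂νhat = ∫ y, f y ∂νhat := by rw [hνres]
  rw [hset]
  calc |∫ y, f y ∂νhat - ρ x|
      ≤ |∫ y, f y ∂νhat - ∫ y, f y ∂ξ| + |∫ y, f y ∂ξ - ρ x| := abs_sub_le _ _ _
    _ ≤ (L : ℝ) * W1 νhat ξ + h * (Lρ : ℝ) := add_le_add hterm1 hterm2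
end

section
/- Let P be a compact hypercube in ℝ^m with Lebesgue volume V, and let K : P × P → [0,∞) be a kernel with bandwidth h > 0 satisfying: (a) ∫_P K(x,y) dy = 1 for every x ∈ P; (b) K(x,y) = 0 whenever ‖x−y‖ > h; (c) for every x ∈ P the map y ↦ K(x,y) is Lipschitz with constant L. Let ξ be a probability measure on P with a Lipschitz density ρ ≥ 0, let ν̂ be any probability measure on P, fix q ∈ (0,1), and set p½(x) = q/V + (1−q)·∫_P K(x,y) dν̂(y). Then for every γ ∈ (0,1), sup_{x∈P} ρ(x)/p½(x) ≤ 1/((1−q)γ) + (V/(q(1−γ))) · (L · W₁(ν̂, ξ) + h · ‖ρ‖_Lip). -/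
/-!
Extend `K x ·` from `P` to a globally `L`-Lipschitz function `g`. Averaging `ρ` against the
kernel moves it by at most `h‖ρ‖_Lip`, so `∫ g dξ ≥ ρ x - h‖ρ‖_Lip`, and the easy half of
Kantorovich–Rubinstein duality gives `∫ g dξ - ∫ g dν̂ ≤ L W₁(ν̂, ξ)`. Hence
`A := ∫_P K(x, y) dν̂(y) ≥ ρ x - E` with `E = L W₁(ν̂, ξ) + h‖ρ‖_Lip`. If `A ≥ γ ρ x` the ratio
is at most `1/((1-q)γ)`; otherwise `(1-γ) ρ x < E`, and bounding the denominator below by `q/V`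
gives the second term.
-/
open MeasureTheory
open Bornology

lemma isCompact_euclideanSpace_box {ι : Type*} [Fintype ι] (a b : ι → ℝ) :
    IsCompact {x : EuclideanSpace ℝ ι | ∀ i, a i ≤ x i ∧ x i ≤ b i} := by
  convert (EuclideanSpace.equiv ι ℝ).toHomeomorph.isCompact_preimage.mpr
    (isCompact_univ_pi fun i => isCompact_Icc (a := a i) (b := b i)) using 1
  ext x
  simp [Pi.le_def, forall_and]

lemma div_add_mul_le_of_sub_le {r A V q γ E : ℝ} (hr : 0 ≤ r) (hA : 0 ≤ A) (hrA : r - E ≤ A)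
    (hE : 0 ≤ E) (hV : 0 < V) (hq0 : 0 < q) (hq1 : q < 1) (hγ0 : 0 < γ) (hγ1 : γ < 1) :
    r / (q / V + (1 - q) * A) ≤ 1 / ((1 - q) * γ) + V / (q * (1 - γ)) * E := by
  have hq : 0 < 1 - q := by linarith
  have hγ : 0 < 1 - γ := by linarith
  have hqV : 0 < q / V := by positivity
  rcases le_or_gt (γ * r) A with hγrA | hAγr
  · calc r / (q / V + (1 - q) * A) ≤ 1 / ((1 - q) * γ) := by
          rw [div_le_div_iff₀ (by positivity) (by positivity)]
          nlinarith [mul_le_mul_of_nonneg_left hγrA hq.le]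
      _ ≤ _ := le_add_of_nonneg_right (by positivity)
  · have hrE : r ≤ E / (1 - γ) := by rw [le_div_iff₀ hγ]; linarith
    calc r / (q / V + (1 - q) * A) ≤ r / (q / V) :=
          div_le_div_of_nonneg_left hr hqV (le_add_of_nonneg_right (by positivity))
      _ = V / q * r := by field_simp
      _ ≤ V / q * (E / (1 - γ)) := by gcongr
      _ = V / (q * (1 - γ)) * E := by field_simp
      _ ≤ _ := le_add_of_nonneg_left (by positivity)

lemma integral_withDensity_ofReal {X : Type*} [MeasurableSpace X] {μ : Measure X} {ρ : X → ℝ}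
    (hρm : AEMeasurable ρ μ) (hρ0 : 0 ≤ᵐ[μ] ρ) (g : X → ℝ) :
    ∫ y, g y ∂μ.withDensity (fun y => ENNReal.ofReal (ρ y)) = ∫ y, ρ y * g y ∂μ := by
  rw [integral_withDensity_eq_integral_toReal_smul₀ hρm.ennreal_ofReal
    (ae_of_all _ fun _ => ENNReal.ofReal_lt_top)]
  refine integral_congr_ae ?_
  filter_upwards [hρ0] with y hy
  simp [ENNReal.toReal_ofReal hy]

lemma LipschitzOnWith.sub_mul_le_setIntegral_mul {X : Type*} [PseudoMetricSpace X]
    [MeasurableSpace X] [OpensMeasurableSpace X] {μ : Measure X} {s : Set X} (hs : MeasurableSet s)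
    {ρ k : X → ℝ} {Lρ : NNReal} (hρ : LipschitzOnWith Lρ ρ s) {x : X} (hx : x ∈ s) {h : ℝ}
    (hk0 : ∀ y ∈ s, 0 ≤ k y) (hk1 : ∫ y in s, k y ∂μ = 1)
    (hksupp : ∀ y ∈ s, h < dist x y → k y = 0) :
    ρ x - h * Lρ ≤ ∫ y in s, ρ y * k y ∂μ := by
  -- A non-integrable function has Bochner integral `0`, so `∫ k = 1` forces integrability.
  have hk : IntegrableOn k s μ := Integrable.of_integral_ne_zero (by rw [hk1]; exact one_ne_zero)
  have hnear : ∀ y ∈ s, |ρ y - ρ x| * k y ≤ h * Lρ * k y := by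
    intro y hy
    rcases le_or_gt (dist x y) h with hxy | hxy
    · refine mul_le_mul_of_nonneg_right ?_ (hk0 y hy)
      calc |ρ y - ρ x| = dist (ρ y) (ρ x) := (Real.dist_eq _ _).symm
        _ ≤ Lρ * dist y x := hρ.dist_le_mul y hy x hx
        _ ≤ h * Lρ := by rw [dist_comm, mul_comm]; gcongr
    · simp [hksupp y hy hxy]
  have hρk : IntegrableOn (fun y => ρ y * k y) s μ := by
    refine Integrable.mono' (hk.const_mul (|ρ x| + h * Lρ))
      ((hρ.continuousOn.aestronglyMeasurable hs).mul hk.aestronglyMeasurable) ?_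
    filter_upwards [ae_restrict_mem hs] with y hy
    rw [norm_mul, Real.norm_eq_abs, Real.norm_of_nonneg (hk0 y hy), add_mul]
    linarith [hnear y hy,
      mul_le_mul_of_nonneg_right (abs_sub_abs_le_abs_sub (ρ y) (ρ x)) (hk0 y hy)]
  calc ρ x - h * Lρ = ∫ y in s, (ρ x - h * Lρ) * k y ∂μ := by rw [integral_const_mul, hk1, mul_one]
    _ ≤ ∫ y in s, ρ y * k y ∂μ := by
      refine setIntegral_mono_on (hk.const_mul _) hρk hs fun y hy => ?_
      have := neg_abs_le (ρ y - ρ x)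
      nlinarith [hnear y hy, hk0 y hy]

lemma W1_nonneg {X : Type*} [MeasurableSpace X] [PseudoMetricSpace X] (μ ν : Measure X) :
    0 ≤ W1 μ ν :=
  Real.sInf_nonneg fun _ ⟨_, _, _, hr⟩ => hr ▸ integral_nonneg fun _ => dist_nonneg

section Coupling

variable {X : Type*} [PseudoMetricSpace X] [MeasurableSpace X] [BorelSpace X]
  [SecondCountableTopology X] {μ ν : Measure X} [IsProbabilityMeasure μ] {f : X → ℝ} {L : NNReal}
  {s : Set X}

lemma LipschitzWith.integral_sub_le_mul_integral_dist (hf : LipschitzWith L f) (hs : IsBounded s)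
    (hμ : ∀ᵐ x ∂μ, x ∈ s) (hν : ∀ᵐ x ∂ν, x ∈ s) {π : Measure (X × X)}
    (hπ1 : π.map Prod.fst = μ) (hπ2 : π.map Prod.snd = ν) :
    ∫ x, f x ∂ν - ∫ x, f x ∂μ ≤ L * ∫ p, dist p.1 p.2 ∂π := by
  have : IsProbabilityMeasure (π.map Prod.fst) := hπ1 ▸ inferInstance
  have : IsProbabilityMeasure π := Measure.isProbabilityMeasure_of_map Prod.fst
  have hs1 : ∀ᵐ p ∂π, p.1 ∈ s := ae_of_ae_map measurable_fst.aemeasurable (hπ1 ▸ hμ)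
  have hs2 : ∀ᵐ p ∂π, p.2 ∈ s := ae_of_ae_map measurable_snd.aemeasurable (hπ2 ▸ hν)
  obtain ⟨C, hC⟩ := (hf.isBounded_image hs).exists_norm_le
  have hint : ∀ g : X × X → X, Continuous g → (∀ᵐ p ∂π, g p ∈ s) →
      Integrable (fun p => f (g p)) π := fun g hg hgs =>
    .of_bound (hf.continuous.comp hg).aestronglyMeasurable C
      (by filter_upwards [hgs] with p hp using hC _ (Set.mem_image_of_mem f hp))
  have hdist : Integrable (fun p : X × X => dist p.1 p.2) π :=
    .of_bound (continuous_fst.dist continuous_snd).aestronglyMeasurable (Metric.diam s)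
      (by filter_upwards [hs1, hs2] with p hp1 hp2
          rw [Real.norm_of_nonneg dist_nonneg]
          exact Metric.dist_le_diam_of_mem hs hp1 hp2)
  calc ∫ x, f x ∂ν - ∫ x, f x ∂μ = ∫ p, (f p.2 - f p.1) ∂π := by
        rw [← hπ1, ← hπ2, integral_map measurable_fst.aemeasurable
          hf.continuous.aestronglyMeasurable, integral_map measurable_snd.aemeasurable
          hf.continuous.aestronglyMeasurable, integral_sub (hint _ continuous_snd hs2)
          (hint _ continuous_fst hs1)]
    _ ≤ ∫ p, L * dist p.1 p.2 ∂π := by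
        refine integral_mono ((hint _ continuous_snd hs2).sub (hint _ continuous_fst hs1))
          (hdist.const_mul _) fun p => ?_
        calc f p.2 - f p.1 ≤ dist (f p.2) (f p.1) := (le_abs_self _).trans (Real.dist_eq _ _).ge
          _ ≤ L * dist p.2 p.1 := hf.dist_le_mul _ _
          _ = L * dist p.1 p.2 := by rw [dist_comm]
    _ = L * ∫ p, dist p.1 p.2 ∂π := integral_const_mul _ _

lemma LipschitzWith.integral_sub_le_mul_W1 [IsProbabilityMeasure ν] (hf : LipschitzWith L f)
    (hs : IsBounded s) (hμ : ∀ᵐ x ∂μ, x ∈ s) (hν : ∀ᵐ x ∂ν, x ∈ s) :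
    ∫ x, f x ∂ν - ∫ x, f x ∂μ ≤ L * W1 μ ν := by
  rw [W1, ← smul_eq_mul, ← Real.sInf_smul_of_nonneg L.coe_nonneg]
  refine le_csInf (Set.Nonempty.smul_set ⟨_, μ.prod ν, by simp, by simp, rfl⟩) ?_
  rintro _ ⟨_, ⟨π, hπ1, hπ2, rfl⟩, rfl⟩
  exact hf.integral_sub_le_mul_integral_dist hs hμ hν hπ1 hπ2

end Coupling

theorem stmt_5_general {m : ℕ} (a b : Fin m → ℝ)
    (P : Set (EuclideanSpace ℝ (Fin m)))
    (hP : P = {x : EuclideanSpace ℝ (Fin m) | ∀ i, a i ≤ x i ∧ x i ≤ b i})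
    (V : ℝ) (hV : V = (volume P).toReal)
    (h : ℝ) (hh : 0 < h)
    (K : EuclideanSpace ℝ (Fin m) → EuclideanSpace ℝ (Fin m) → ℝ)
    (hKnonneg : ∀ x ∈ P, ∀ y ∈ P, 0 ≤ K x y)
    (hKint : ∀ x ∈ P, ∫ y in P, K x y ∂volume = 1)
    (hKsupp : ∀ x ∈ P, ∀ y ∈ P, h < dist x y → K x y = 0)
    (L : NNReal) (hKLip : ∀ x ∈ P, LipschitzOnWith L (fun y => K x y) P)
    (ρ : EuclideanSpace ℝ (Fin m) → ℝ) (hρnonneg : ∀ x ∈ P, 0 ≤ ρ x)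
    (Lρ : NNReal) (hρLip : LipschitzOnWith Lρ ρ P)
    (ξ : Measure (EuclideanSpace ℝ (Fin m))) [IsProbabilityMeasure ξ]
    (hξ : ξ = (volume.restrict P).withDensity (fun x => ENNReal.ofReal (ρ x)))
    (νhat : Measure (EuclideanSpace ℝ (Fin m))) [IsProbabilityMeasure νhat]
    (hνhat : νhat Pᶜ = 0)
    (q : ℝ) (hq0 : 0 < q) (hq1 : q < 1)
    (γ : ℝ) (hγ0 : 0 < γ) (hγ1 : γ < 1) :
    ∀ x ∈ P, ρ x / (q / V + (1 - q) * ∫ y in P, K x y ∂νhat) ≤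
      1 / ((1 - q) * γ) + (V / (q * (1 - γ))) * ((L : ℝ) * W1 νhat ξ + h * (Lρ : ℝ)) := by
  intro x hx
  have hPc : IsCompact P := hP ▸ isCompact_euclideanSpace_box a b
  have hPm : MeasurableSet P := hPc.isClosed.measurableSet
  have hνP : ∀ᵐ y ∂νhat, y ∈ P := mem_ae_iff.mpr hνhat
  have hξP : ∀ᵐ y ∂ξ, y ∈ P :=
    hξ ▸ (withDensity_absolutelyContinuous _ _).ae_le (ae_restrict_mem hPm)
  have hVpos : 0 < V := by
    refine hV ▸ ENNReal.toReal_pos (fun hP0 => IsProbabilityMeasure.ne_zero ξ ?_)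
      hPc.measure_lt_top.ne
    rw [hξ, Measure.restrict_eq_zero.mpr hP0, withDensity_zero_left]
  obtain ⟨g, hgLip, hKg⟩ := (hKLip x hx).extend_real
  have hνg : ∫ y in P, K x y ∂νhat = ∫ y, g y ∂νhat := by
    rw [setIntegral_congr_fun hPm hKg, Measure.restrict_eq_self_of_ae_mem hνP]
  have hξg : ρ x - h * Lρ ≤ ∫ y, g y ∂ξ := by
    rw [hξ, integral_withDensity_ofReal (hρLip.continuousOn.aemeasurable hPm)
      ((ae_restrict_mem hPm).mono hρnonneg), ← setIntegral_congr_fun hPm fun y hy => by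
        rw [← hKg hy]]
    exact hρLip.sub_mul_le_setIntegral_mul hPm hx (hKnonneg x hx) (hKint x hx) (hKsupp x hx)
  have hW := hgLip.integral_sub_le_mul_W1 hPc.isBounded hνP hξP
  refine div_add_mul_le_of_sub_le (hρnonneg x hx) (setIntegral_nonneg hPm (hKnonneg x hx))
    (by linarith) ?_ hVpos hq0 hq1 hγ0 hγ1
  exact add_nonneg (mul_nonneg L.coe_nonneg (W1_nonneg _ _)) (mul_nonneg hh.le Lρ.coe_nonneg)

/-- supremum bound for the likelihood ratio
`ρ / (q/V + (1−q) p̃) ≤ 1/((1−q)γ) + (V/(q(1−γ)))·(L·W₁(ν̂,ξ) + h·‖ρ‖_Lip)`. -/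
theorem stmt_5 {m : ℕ} (a b : Fin m → ℝ) (hab : ∀ i, a i ≤ b i)
    (P : Set (EuclideanSpace ℝ (Fin m)))
    (hP : P = {x : EuclideanSpace ℝ (Fin m) | ∀ i, a i ≤ x i ∧ x i ≤ b i})
    (V : ℝ) (hV : V = (volume P).toReal)
    (h : ℝ) (hh : 0 < h)
    (K : EuclideanSpace ℝ (Fin m) → EuclideanSpace ℝ (Fin m) → ℝ)
    (hKnonneg : ∀ x ∈ P, ∀ y ∈ P, 0 ≤ K x y)
    (hKint : ∀ x ∈ P, ∫ y in P, K x y ∂volume = 1)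
    (hKsupp : ∀ x ∈ P, ∀ y ∈ P, h < dist x y → K x y = 0)
    (L : NNReal) (hKLip : ∀ x ∈ P, LipschitzOnWith L (fun y => K x y) P)
    (ρ : EuclideanSpace ℝ (Fin m) → ℝ) (hρnonneg : ∀ x ∈ P, 0 ≤ ρ x)
    (Lρ : NNReal) (hρLip : LipschitzOnWith Lρ ρ P)
    (ξ : Measure (EuclideanSpace ℝ (Fin m))) [IsProbabilityMeasure ξ]
    (hξ : ξ = (volume.restrict P).withDensity (fun x => ENNReal.ofReal (ρ x)))
    (νhat : Measure (EuclideanSpace ℝ (Fin m))) [IsProbabilityMeasure νhat]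
    (hνhat : νhat Pᶜ = 0)
    (q : ℝ) (hq0 : 0 < q) (hq1 : q < 1)
    (γ : ℝ) (hγ0 : 0 < γ) (hγ1 : γ < 1) :
    ∀ x ∈ P, ρ x / (q / V + (1 - q) * ∫ y in P, K x y ∂νhat) ≤
      1 / ((1 - q) * γ) + (V / (q * (1 - γ))) * ((L : ℝ) * W1 νhat ξ + h * (Lρ : ℝ)) :=
  stmt_5_general a b P hP V hV h hh K hKnonneg hKint hKsupp L hKLip ρ hρnonneg Lρ hρLip ξ hξ νhat
    hνhat q hq0 hq1 γ hγ0 hγ1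
end

section
/- Let P be a set, let ρ, p̃ : P → [0,∞) be functions with sup_{x∈P} |p̃(x) − ρ(x)| ≤ ε for some ε ≥ 0, and let q ∈ (0,1), V > 0, γ ∈ (0,1). Then for every x ∈ P, ρ(x)/( q/V + (1−q)·p̃(x) ) ≤ 1/((1−q)γ) + V·ε/(q(1−γ)). -/
/-!
Split according to whether `p̃(x) ≥ γ ρ(x)`. If so, the mixture density is at least
`(1 - q) γ ρ(x)`. If not, `ρ(x) - p̃(x) > (1 - γ) ρ(x)`, so `(1 - γ) ρ(x) ≤ ε`, and the
mixture density is at least `q / V`.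
-/

section MixtureRatio

variable {q V γ p r ε : ℝ}

lemma div_mixture_le_of_mul_le (hq0 : 0 < q) (hq1 : q < 1) (hV : 0 < V) (hγ0 : 0 < γ)
    (hp : 0 ≤ p) (hγr : γ * r ≤ p) :
    r / (q / V + (1 - q) * p) ≤ 1 / ((1 - q) * γ) := by
  have h1q : 0 < 1 - q := by linarith
  rw [div_le_div_iff₀ (by positivity) (by positivity), one_mul]
  have : (1 - q) * (γ * r) ≤ (1 - q) * p := mul_le_mul_of_nonneg_left hγr h1q.le
  linarith [div_pos hq0 hV]

lemma div_mixture_le_of_lt_mul (hq0 : 0 < q) (hq1 : q < 1) (hV : 0 < V) (hγ0 : 0 < γ)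
    (hγ1 : γ < 1) (hp : 0 ≤ p) (hclose : |p - r| ≤ ε) (hγr : p < γ * r) :
    r / (q / V + (1 - q) * p) ≤ V * ε / (q * (1 - γ)) := by
  have hr : 0 ≤ r := (pos_of_mul_pos_right (hp.trans_lt hγr) hγ0.le).le
  have h1γ : 0 < 1 - γ := by linarith
  have hrε : (1 - γ) * r ≤ ε := by linarith [neg_abs_le (p - r)]
  calc r / (q / V + (1 - q) * p)
      ≤ r / (q / V) := by
        gcongr
        exact le_add_of_nonneg_right (mul_nonneg (by linarith) hp)
    _ = V * ((1 - γ) * r) / (q * (1 - γ)) := by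
        field_simp [h1γ.ne']
    _ ≤ V * ε / (q * (1 - γ)) := by gcongr

end MixtureRatio

theorem stmt_8_general {α : Type*} (P : Set α) (ρ ptilde : α → ℝ)
    (hptilde : ∀ x ∈ P, 0 ≤ ptilde x)
    (ε : ℝ) (hclose : ∀ x ∈ P, |ptilde x - ρ x| ≤ ε)
    (q : ℝ) (hq0 : 0 < q) (hq1 : q < 1)
    (V : ℝ) (hV : 0 < V)
    (γ : ℝ) (hγ0 : 0 < γ) (hγ1 : γ < 1) :
    ∀ x ∈ P, ρ x / (q / V + (1 - q) * ptilde x) ≤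
      1 / ((1 - q) * γ) + V * ε / (q * (1 - γ)) := by
  intro x hx
  have hε : 0 ≤ ε := (abs_nonneg _).trans (hclose x hx)
  rcases le_or_gt (γ * ρ x) (ptilde x) with hγρ | hγρ
  · have := div_mixture_le_of_mul_le hq0 hq1 hV hγ0 (hptilde x hx) hγρ
    have : 0 ≤ V * ε / (q * (1 - γ)) := by positivity
    linarith
  · have := div_mixture_le_of_lt_mul hq0 hq1 hV hγ0 hγ1 (hptilde x hx) (hclose x hx) hγρ
    have : 0 ≤ 1 / ((1 - q) * γ) := by positivity
    linarith

/-- elementary ratio inequality. If `|p̃ − ρ| ≤ ε` uniformly on `P`,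
`ρ, p̃ ≥ 0`, `q ∈ (0,1)`, `V > 0` and `γ ∈ (0,1)`, then for every `x ∈ P`,
`ρ(x)/(q/V + (1−q) p̃(x)) ≤ 1/((1−q)γ) + V ε/(q(1−γ))`. -/
theorem stmt_8 {α : Type*} (P : Set α) (ρ ptilde : α → ℝ)
    (hρ : ∀ x ∈ P, 0 ≤ ρ x) (hptilde : ∀ x ∈ P, 0 ≤ ptilde x)
    (ε : ℝ) (hε : 0 ≤ ε) (hclose : ∀ x ∈ P, |ptilde x - ρ x| ≤ ε)
    (q : ℝ) (hq0 : 0 < q) (hq1 : q < 1)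
    (V : ℝ) (hV : 0 < V)
    (γ : ℝ) (hγ0 : 0 < γ) (hγ1 : γ < 1) :
    ∀ x ∈ P, ρ x / (q / V + (1 - q) * ptilde x) ≤
      1 / ((1 - q) * γ) + V * ε / (q * (1 - γ)) :=
  stmt_8_general P ρ ptilde hptilde ε hclose q hq0 hq1 V hV γ hγ0 hγ1
end

section
/- Let P be a convex subset of ℝ^m, let f, g : P → ℝ be continuously differentiable with g ≥ 0 pointwise, and let q ∈ (0,1), v > 0. Then the Lipschitz seminorm of the function x ↦ f(x)/((1−q)·g(x) + q/v) satisfies ‖f/((1−q)g + q/v)‖_Lip ≤ ((1−q)·v²/q²) · ( ‖∇f‖_∞ · ‖g − f‖_∞ + ‖f‖_∞ · ‖∇f − ∇g‖_∞ ) + (v/q)·‖∇f‖_∞. -/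
/-!
Write `D = (1 - q) g + q / v`, so that `D ≥ q / v > 0` on `P`. The derivative of `f / D` is
`D⁻² (D ∇f - (1 - q) f ∇g)`, and splitting `D = (1 - q)(g - f) + (1 - q) f + q / v` gives
`D ∇f - (1 - q) f ∇g = (1 - q)(g - f) ∇f + (1 - q) f (∇f - ∇g) + (q / v) ∇f`.
Bounding each term and `D⁻² ≤ (v / q)²` bounds the derivative on `P`; the mean value
inequality on the convex set `P` turns this into the Lipschitz bound.
-/

section Quotient

variable {𝕜 E : Type*} [NontriviallyNormedField 𝕜] [NormedAddCommGroup E] [NormedSpace 𝕜 E]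
  {c d : E → 𝕜} {c' d' : E →L[𝕜] 𝕜} {s : Set E} {x : E}

theorem HasFDerivWithinAt.fun_div (hc : HasFDerivWithinAt c c' s x)
    (hd : HasFDerivWithinAt d d' s x) (hx : d x ≠ 0) :
    HasFDerivWithinAt (fun y => c y / d y) ((d x ^ 2)⁻¹ • (d x • c' - c x • d')) s x := by
  have hinv : HasFDerivWithinAt (fun y => (d y)⁻¹) (-(d x ^ 2)⁻¹ • d') s x :=
    (hasDerivAt_inv hx).comp_hasFDerivWithinAt x hd
  have hmul := hc.fun_mul hinv
  simp only [← div_eq_mul_inv] at hmul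
  refine hmul.congr_fderiv ?_
  ext e
  simp only [add_apply, smul_apply, sub_apply, smul_eq_mul]
  field_simp
  ring

end Quotient

section Estimate

variable {F : Type*} [NormedAddCommGroup F] [NormedSpace ℝ F]

theorem norm_inv_sq_smul_sub_smul_le {r t a b Cu Ca Cba Cuw : ℝ} {u w : F}
    (hr : 0 ≤ r) (ht : 0 < t) (hb : 0 ≤ b)
    (hu : ‖u‖ ≤ Cu) (ha : |a| ≤ Ca) (hba : |b - a| ≤ Cba) (huw : ‖u - w‖ ≤ Cuw) :
    ‖((r * b + t) ^ 2)⁻¹ • ((r * b + t) • u - a • (r • w))‖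
      ≤ r / t ^ 2 * (Cu * Cba + Ca * Cuw) + Cu / t := by
  have hCba : 0 ≤ Cba := (abs_nonneg _).trans hba
  have hCa : 0 ≤ Ca := (abs_nonneg _).trans ha
  have hCu : 0 ≤ Cu := (norm_nonneg _).trans hu
  have ht_le : t ≤ r * b + t := by nlinarith
  have hsplit : (r * b + t) • u - a • (r • w)
      = (r * (b - a)) • u + (r * a) • (u - w) + t • u := by
    module
  have hnum : ‖(r * (b - a)) • u + (r * a) • (u - w) + t • u‖
      ≤ r * Cba * Cu + r * Ca * Cuw + t * Cu := by
    refine norm_add₃_le.trans (add_le_add_three ?_ ?_ ?_)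
    · rw [norm_smul, Real.norm_eq_abs, abs_mul, abs_of_nonneg hr]; gcongr
    · rw [norm_smul, Real.norm_eq_abs, abs_mul, abs_of_nonneg hr]; gcongr
    · rw [norm_smul, Real.norm_of_nonneg ht.le]; gcongr
  calc ‖((r * b + t) ^ 2)⁻¹ • ((r * b + t) • u - a • (r • w))‖
      = ((r * b + t) ^ 2)⁻¹ * ‖(r * (b - a)) • u + (r * a) • (u - w) + t • u‖ := by
        rw [norm_smul, hsplit, Real.norm_of_nonneg (by positivity)]
    _ ≤ (t ^ 2)⁻¹ * (r * Cba * Cu + r * Ca * Cuw + t * Cu) := by gcongr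
    _ = r / t ^ 2 * (Cu * Cba + Ca * Cuw) + Cu / t := by field_simp

end Estimate

theorem Convex.lipschitzOnWith_div_mul_add_const {E : Type*} [NormedAddCommGroup E]
    [NormedSpace ℝ E] {P : Set E} (hP : Convex ℝ P) {f g : E → ℝ}
    (hf : DifferentiableOn ℝ f P) (hg : DifferentiableOn ℝ g P) (hg0 : ∀ x ∈ P, 0 ≤ g x)
    {r t Cdf Cf Cgf Cdfg : ℝ} (hr : 0 ≤ r) (ht : 0 < t)
    (hCdf : ∀ x ∈ P, ‖fderivWithin ℝ f P x‖ ≤ Cdf) (hCf : ∀ x ∈ P, |f x| ≤ Cf)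
    (hCgf : ∀ x ∈ P, |g x - f x| ≤ Cgf)
    (hCdfg : ∀ x ∈ P, ‖fderivWithin ℝ f P x - fderivWithin ℝ g P x‖ ≤ Cdfg) :
    LipschitzOnWith (Real.toNNReal (r / t ^ 2 * (Cdf * Cgf + Cf * Cdfg) + Cdf / t))
      (fun x => f x / (r * g x + t)) P := by
  refine hP.lipschitzOnWith_of_nnnorm_hasFDerivWithin_le
    (f' := fun x => ((r * g x + t) ^ 2)⁻¹ •
      ((r * g x + t) • fderivWithin ℝ f P x - f x • (r • fderivWithin ℝ g P x)))
    (fun x hx => ?_) (fun x hx => ?_)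
  · have hD : HasFDerivWithinAt (fun y => r * g y + t) (r • fderivWithin ℝ g P x) P x :=
      ((hg x hx).hasFDerivWithinAt.const_mul r).add_const t
    have hD0 : r * g x + t ≠ 0 := by nlinarith [hg0 x hx]
    exact (hf x hx).hasFDerivWithinAt.fun_div hD hD0
  · rw [← NNReal.coe_le_coe, coe_nnnorm]
    exact (norm_inv_sq_smul_sub_smul_le hr ht (hg0 x hx) (hCdf x hx) (hCf x hx) (hCgf x hx)
      (hCdfg x hx)).trans (Real.le_coe_toNNReal _)

/-- Lipschitz-seminorm bound for the regularized quotient.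
For `f, g` continuously differentiable on a convex `P ⊆ ℝ^m` with `g ≥ 0`,
`q ∈ (0,1)` and `v > 0`,
`‖f/((1−q)g + q/v)‖_Lip ≤ ((1−q)v²/q²)(‖∇f‖_∞ ‖g−f‖_∞ + ‖f‖_∞ ‖∇f−∇g‖_∞) + (v/q)‖∇f‖_∞`. -/
theorem stmt_9 {m : ℕ} (P : Set (EuclideanSpace ℝ (Fin m))) (hPconv : Convex ℝ P)
    (f g : EuclideanSpace ℝ (Fin m) → ℝ)
    (hf : ContDiffOn ℝ 1 f P) (hg : ContDiffOn ℝ 1 g P)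
    (hgnonneg : ∀ x ∈ P, 0 ≤ g x)
    (q : ℝ) (hq0 : 0 < q) (hq1 : q < 1)
    (v : ℝ) (hv : 0 < v)
    (Cdf : ℝ) (hCdf : ∀ x ∈ P, ‖fderivWithin ℝ f P x‖ ≤ Cdf)
    (Cf : ℝ) (hCf : ∀ x ∈ P, |f x| ≤ Cf)
    (Cgf : ℝ) (hCgf : ∀ x ∈ P, |g x - f x| ≤ Cgf)
    (Cdfg : ℝ) (hCdfg : ∀ x ∈ P, ‖fderivWithin ℝ f P x - fderivWithin ℝ g P x‖ ≤ Cdfg) :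
    LipschitzOnWith
      (Real.toNNReal
        (((1 - q) * v ^ 2 / q ^ 2) * (Cdf * Cgf + Cf * Cdfg) + (v / q) * Cdf))
      (fun x => f x / ((1 - q) * g x + q / v)) P := by
  have hK : ((1 - q) * v ^ 2 / q ^ 2) * (Cdf * Cgf + Cf * Cdfg) + (v / q) * Cdf
      = (1 - q) / (q / v) ^ 2 * (Cdf * Cgf + Cf * Cdfg) + Cdf / (q / v) := by
    field_simp
  rw [hK]
  exact hPconv.lipschitzOnWith_div_mul_add_const (hf.differentiableOn one_ne_zero)
    (hg.differentiableOn one_ne_zero) hgnonneg (by linarith) (by positivity)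
    hCdf hCf hCgf hCdfg
end

section
/- Let ζ : ℝ^m → [0,∞) be a kernel supported in the closed unit ball, let h > 0, and let ζ̃_h be the reflected kernel on the hypercube P = ∏_{i=1}^m [x_min^i, x_max^i] obtained from ζ_h(u) = h^{−m}·ζ(u/h) by the recursive boundary-reflection construction. Then for all x, y ∈ P with ‖x − y‖ > h, one has ζ̃_h(x; y) = 0. -/
open MeasureTheory

/-- The reflected kernel `ζ̃_h^{(i)}` on the hypercube `∏ [xmin i, xmax i]`, built
recursively from the scaled kernel `ζ_h(u) = h^{-m} ζ(u/h)` by reflecting the second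
argument across the two faces in each coordinate direction. -/
noncomputable def reflKer {m : ℕ} (xmin xmax : Fin m → ℝ)
    (ζ : (Fin m → ℝ) → ℝ) (h : ℝ) : ℕ → (Fin m → ℝ) → (Fin m → ℝ) → ℝ
  | 0, x, y => (1 / h ^ m) * ζ (fun i => (x i - y i) / h)
  | (i + 1), x, y =>
      if hi : i < m then
        reflKer xmin xmax ζ h i x y
          + reflKer xmin xmax ζ h i x
              (Function.update y ⟨i, hi⟩ (2 * xmin ⟨i, hi⟩ - y ⟨i, hi⟩))
          + reflKer xmin xmax ζ h i x
              (Function.update y ⟨i, hi⟩ (2 * xmax ⟨i, hi⟩ - y ⟨i, hi⟩))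
      else reflKer xmin xmax ζ h i x y

lemma reflKer_aux {m : ℕ} (xmin xmax : Fin m → ℝ)
    (ζ : (Fin m → ℝ) → ℝ)
    (hζsupp : ∀ u : Fin m → ℝ, 1 < Real.sqrt (∑ i, u i ^ 2) → ζ u = 0)
    (h : ℝ) (hh : 0 < h)
    (x : Fin m → ℝ) (hx : ∀ i, xmin i ≤ x i ∧ x i ≤ xmax i) :
    ∀ (i : ℕ) (y : Fin m → ℝ),
      (∀ j : Fin m, (j : ℕ) < i → xmin j ≤ y j ∧ y j ≤ xmax j) →
      h ^ 2 < ∑ j, (x j - y j) ^ 2 →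
      reflKer xmin xmax ζ h i x y = 0 := by
  intro i
  induction i with
  | zero =>
    intro y _ hsum
    show (1 / h ^ m) * ζ (fun i => (x i - y i) / h) = 0
    rw [hζsupp _ ?_, mul_zero]
    have hs : (1 : ℝ) < ∑ j, ((x j - y j) / h) ^ 2 := by
      have : ∑ j, ((x j - y j) / h) ^ 2 = (∑ j, (x j - y j) ^ 2) / h ^ 2 := by
        rw [Finset.sum_div]; exact Finset.sum_congr rfl fun j _ => by ring
      rw [this]
      rw [lt_div_iff₀ (by positivity)]
      linarith
    have h0 : (0 : ℝ) ≤ ∑ j, ((x j - y j) / h) ^ 2 :=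
      Finset.sum_nonneg fun j _ => sq_nonneg _
    rw [show (1:ℝ) = Real.sqrt 1 by simp]
    exact Real.sqrt_lt_sqrt (by norm_num) hs
  | succ i ih =>
    intro y hyP hsum
    show (if hi : i < m then _ else _) = 0
    split
    · next hi =>
      have key : ∀ c : ℝ, 0 ≤ (x ⟨i, hi⟩ - c) * (y ⟨i, hi⟩ - c) →
          reflKer xmin xmax ζ h i x (Function.update y ⟨i, hi⟩ (2 * c - y ⟨i, hi⟩)) = 0 := by
        intro c hc
        apply ih
        · intro j hj
          rw [Function.update_of_ne (by
            intro hje; rw [hje] at hj; simp at hj)]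
          exact hyP j (Nat.lt_succ_of_lt hj)
        · calc h ^ 2 < ∑ j, (x j - y j) ^ 2 := hsum
            _ ≤ _ := by
              apply Finset.sum_le_sum
              intro j _
              by_cases hje : j = ⟨i, hi⟩
              · rw [hje, Function.update_self]
                nlinarith [hc]
              · rw [Function.update_of_ne hje]
      have h1 : reflKer xmin xmax ζ h i x y = 0 :=
        ih y (fun j hj => hyP j (Nat.lt_succ_of_lt hj)) hsum
      have hxi := hx ⟨i, hi⟩
      have hyi := hyP ⟨i, hi⟩ (Nat.lt_succ_self i)
      rw [h1, key (xmin ⟨i, hi⟩) (mul_nonneg (by linarith [hxi.1]) (by linarith [hyi.1])),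
        key (xmax ⟨i, hi⟩) (by nlinarith [hxi.2, hyi.2])]
      ring
    · exact ih y (fun j hj => hyP j (Nat.lt_succ_of_lt hj)) hsum

/-- the reflected kernel vanishes for points farther apart than the
bandwidth: if `x, y ∈ P` and `‖x − y‖ > h`, then `ζ̃_h(x; y) = 0`. -/
theorem stmt_10 {m : ℕ} (xmin xmax : Fin m → ℝ) (hbox : ∀ i, xmin i ≤ xmax i)
    (ζ : (Fin m → ℝ) → ℝ) (hζnonneg : ∀ u, 0 ≤ ζ u)
    (hζsupp : ∀ u : Fin m → ℝ, 1 < Real.sqrt (∑ i, u i ^ 2) → ζ u = 0)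
    (h : ℝ) (hh : 0 < h)
    (x y : Fin m → ℝ)
    (hx : ∀ i, xmin i ≤ x i ∧ x i ≤ xmax i)
    (hy : ∀ i, xmin i ≤ y i ∧ y i ≤ xmax i)
    (hfar : h < Real.sqrt (∑ i, (x i - y i) ^ 2)) :
    reflKer xmin xmax ζ h m x y = 0 := by
  apply reflKer_aux xmin xmax ζ hζsupp h hh x hx m y (fun j _ => hy j)
  have hs : 0 ≤ ∑ j, (x j - y j) ^ 2 := Finset.sum_nonneg fun j _ => sq_nonneg _
  calc h ^ 2 < Real.sqrt (∑ j, (x j - y j) ^ 2) ^ 2 := by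
        apply pow_lt_pow_left₀ hfar hh.le; norm_num
    _ = _ := Real.sq_sqrt hs
end

section
/- Let ζ : ℝ^m → [0,∞) be a kernel supported in the closed unit ball with ∫_{ℝ^m} ζ(u) du = 1, let 0 < h ≤ min_i (x_max^i − x_min^i), and let ζ̃_h be the reflected kernel on the hypercube P = ∏_{i=1}^m [x_min^i, x_max^i] obtained from ζ_h(u) = h^{−m}·ζ(u/h) by the recursive boundary-reflection construction. Then for every x ∈ P, ∫_P ζ̃_h(x; y) dy = 1. -/
open MeasureTheory

/-! Reflecting coordinate `i` about `xmin i` (resp. `xmax i`) is measure preserving and maps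
`[xmin i, xmax i]` onto the adjacent interval `[2 xmin i - xmax i, xmin i]`
(resp. `[xmax i, 2 xmax i - xmin i]`). So each reflection step turns the integral of the kernel
over a box into the integral of the previous kernel over the box tripled in direction `i`.
After `m` steps, `∫_P ζ̃_h(x; ·)` is the integral of `ζ_h(x - ·)` over the tripled box, which
contains the support ball `B(x, h)` since `x ∈ P` and `h ≤ xmax i - xmin i`; hence it is
`∫ ζ = 1`. -/

open Set Function

namespace ReflectedKernel

variable {m : ℕ}

def reflectCoord (i : Fin m) (t : ℝ) (y : Fin m → ℝ) : Fin m → ℝ :=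
  update y i (t - y i)

lemma reflectCoord_apply (i : Fin m) (t : ℝ) (y : Fin m → ℝ) (j : Fin m) :
    reflectCoord i t y j = if j = i then t - y j else y j := by
  rcases eq_or_ne j i with rfl | hj <;> simp [reflectCoord, *]

lemma reflectCoord_involutive (i : Fin m) (t : ℝ) : Involutive (reflectCoord i t) := by
  intro y
  ext j
  simp only [reflectCoord_apply]
  split_ifs <;> ring

lemma measurePreserving_reflectCoord (i : Fin m) (t : ℝ) :
    MeasurePreserving (reflectCoord i t) := by
  have hcoord : ∀ j : Fin m,
      MeasurePreserving (fun s : ℝ => if j = i then t - s else s) volume volume := by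
    intro j
    split_ifs
    · exact Measure.measurePreserving_sub_left volume t
    · exact MeasurePreserving.id volume
  convert volume_preserving_pi hcoord using 1
  ext y j
  exact reflectCoord_apply i t y j

lemma measurableEmbedding_reflectCoord (i : Fin m) (t : ℝ) :
    MeasurableEmbedding (reflectCoord i t) :=
  let hmeas := (measurePreserving_reflectCoord i t).measurable
  (MeasurableEquiv.mk ((reflectCoord_involutive i t).toPerm _) hmeas hmeas).measurableEmbedding

lemma integrable_comp_reflectCoord {f : (Fin m → ℝ) → ℝ} (hf : Integrable f) (i : Fin m)
    (t : ℝ) : Integrable (fun y => f (reflectCoord i t y)) :=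
  ((measurePreserving_reflectCoord i t).integrable_comp_emb
    (measurableEmbedding_reflectCoord i t)).mpr hf

lemma preimage_reflectCoord_univ_pi (i : Fin m) (t : ℝ) (I : Fin m → Set ℝ) :
    reflectCoord i t ⁻¹' univ.pi I = univ.pi (update I i ((t - ·) ⁻¹' I i)) := by
  ext y
  simp only [mem_preimage, mem_univ_pi, reflectCoord_apply]
  refine forall_congr' fun j => ?_
  rcases eq_or_ne j i with rfl | hj <;> simp [*]

lemma setIntegral_univ_pi_update_Icc_add {f : (Fin m → ℝ) → ℝ} (hf : Integrable f)
    {I : Fin m → Set ℝ} (hI : ∀ j, MeasurableSet (I j)) (i : Fin m) {a b c : ℝ}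
    (hab : a ≤ b) (hbc : b ≤ c) :
    (∫ y in univ.pi (update I i (Icc a b)), f y) + ∫ y in univ.pi (update I i (Icc b c)), f y
      = ∫ y in univ.pi (update I i (Icc a c)), f y := by
  have hslab : ∀ S : Set ℝ, univ.pi (update I i S) = {y | y i ∈ S} ∩ pi {i}ᶜ I :=
    fun S => univ_pi_update i I S fun _ s => s
  have hunion : univ.pi (update I i (Icc a c))
      = univ.pi (update I i (Icc a b)) ∪ univ.pi (update I i (Icc b c)) := by
    simp only [hslab, ← union_inter_distrib_right, ← ofPred_or, ← mem_union,
      Icc_union_Icc_eq_Icc hab hbc]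
  have hdisj : AEDisjoint volume (univ.pi (update I i (Icc a b)))
      (univ.pi (update I i (Icc b c))) := by
    refine measure_mono_null (fun y hy => ?_) (Measure.pi_hyperplane _ i b)
    simp only [hslab, mem_inter_iff, mem_Icc] at hy
    exact le_antisymm hy.1.1.2 hy.2.1.1
  have hmeas : MeasurableSet (univ.pi (update I i (Icc b c))) :=
    MeasurableSet.univ_pi fun j => by
      rcases eq_or_ne j i with rfl | hj
      · simp
      · simpa [hj] using hI j
  rw [hunion, setIntegral_union₀ hdisj hmeas.nullMeasurableSet hf.integrableOn hf.integrableOn]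

lemma preimage_reflectCoord_univ_pi_update_Icc (I : Fin m → Set ℝ) (i : Fin m) (t a b : ℝ) :
    reflectCoord i t ⁻¹' univ.pi (update I i (Icc a b))
      = univ.pi (update I i (Icc (t - b) (t - a))) := by
  rw [preimage_reflectCoord_univ_pi, update_idem, update_self, preimage_const_sub_Icc]

lemma setIntegral_add_reflectCoord {f : (Fin m → ℝ) → ℝ} (hf : Integrable f)
    {I : Fin m → Set ℝ} (hI : ∀ j, MeasurableSet (I j)) (i : Fin m) {a b : ℝ}
    (hab : a ≤ b) :
    ∫ y in univ.pi (update I i (Icc a b)),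
        (f y + f (reflectCoord i (2 * a) y) + f (reflectCoord i (2 * b) y))
      = ∫ y in univ.pi (update I i (Icc (2 * a - b) (2 * b - a))), f y := by
  have hreflect : ∀ t c d, t - d = a → t - c = b →
      ∫ y in univ.pi (update I i (Icc a b)), f (reflectCoord i t y)
        = ∫ y in univ.pi (update I i (Icc c d)), f y := by
    intro t c d hd hc
    rw [← hd, ← hc, ← preimage_reflectCoord_univ_pi_update_Icc]
    exact (measurePreserving_reflectCoord i t).setIntegral_preimage_emb
      (measurableEmbedding_reflectCoord i t) f _
  have hS := hf.integrableOn (s := univ.pi (update I i (Icc a b)))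
  have hR : ∀ t,
      IntegrableOn (fun y => f (reflectCoord i t y)) (univ.pi (update I i (Icc a b))) :=
    fun t => (integrable_comp_reflectCoord hf i t).integrableOn
  rw [integral_add (f := fun y => f y + f (reflectCoord i (2 * a) y)) (hS.add (hR _)) (hR _),
    integral_add hS (hR _),
    hreflect (2 * a) (2 * a - b) a (by ring) (by ring),
    hreflect (2 * b) b (2 * b - a) (by ring) (by ring),
    ← setIntegral_univ_pi_update_Icc_add hf hI i (a := 2 * a - b) (b := b) (c := 2 * b - a)
      (by linarith) (by linarith),
    ← setIntegral_univ_pi_update_Icc_add hf hI i (a := 2 * a - b) (b := a) (c := b)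
      (by linarith) hab]
  ring

variable (xmin xmax : Fin m → ℝ) (ζ : (Fin m → ℝ) → ℝ) (h : ℝ) (x : Fin m → ℝ)

lemma reflKer_zero_eq (y : Fin m → ℝ) :
    reflKer xmin xmax ζ h 0 x y = (h ^ m)⁻¹ * ζ (h⁻¹ • (x - y)) := by
  simp only [reflKer, one_div]
  congr 2
  ext j
  simp [div_eq_inv_mul]

lemma reflKer_succ {i : ℕ} (hi : i < m) (y : Fin m → ℝ) :
    reflKer xmin xmax ζ h (i + 1) x y
      = reflKer xmin xmax ζ h i x y
        + reflKer xmin xmax ζ h i x (reflectCoord ⟨i, hi⟩ (2 * xmin ⟨i, hi⟩) y)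
        + reflKer xmin xmax ζ h i x (reflectCoord ⟨i, hi⟩ (2 * xmax ⟨i, hi⟩) y) := by
  rw [reflKer, dif_pos hi]
  rfl

lemma reflKer_succ_of_le {i : ℕ} (hi : m ≤ i) :
    reflKer xmin xmax ζ h (i + 1) x = reflKer xmin xmax ζ h i x := by
  ext y
  rw [reflKer, dif_neg hi.not_gt]

variable {ζ h}

lemma integrable_reflKer (hζ : Integrable ζ) (hh : h ≠ 0) (i : ℕ) :
    Integrable (reflKer xmin xmax ζ h i x) := by
  induction i with
  | zero =>
    simp only [funext (reflKer_zero_eq xmin xmax ζ h x)]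
    exact ((hζ.comp_smul (inv_ne_zero hh)).comp_sub_left x).const_mul _
  | succ i ih =>
    rcases lt_or_ge i m with hi | hi
    · simp only [funext (reflKer_succ xmin xmax ζ h x hi)]
      exact (ih.add (integrable_comp_reflectCoord ih _ _)).add
        (integrable_comp_reflectCoord ih _ _)
    · rwa [reflKer_succ_of_le xmin xmax ζ h x hi]

lemma reflKer_zero_eq_zero
    (hζ : ∀ u : Fin m → ℝ, 1 < Real.sqrt (∑ i, u i ^ 2) → ζ u = 0)
    (hh : 0 < h) {y : Fin m → ℝ} {j : Fin m} (hj : h < |x j - y j|) :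
    reflKer xmin xmax ζ h 0 x y = 0 := by
  rw [reflKer, hζ _, mul_zero]
  calc 1 < |(x j - y j) / h| := by rwa [abs_div, abs_of_pos hh, one_lt_div hh]
    _ = Real.sqrt (((x j - y j) / h) ^ 2) := (Real.sqrt_sq_eq_abs _).symm
    _ ≤ Real.sqrt (∑ i, ((x i - y i) / h) ^ 2) :=
      Real.sqrt_le_sqrt (Finset.single_le_sum (f := fun i => ((x i - y i) / h) ^ 2)
        (fun i _ => sq_nonneg _) (Finset.mem_univ j))

lemma reflKer_zero_eq_zero_of_notMem
    (hζ : ∀ u : Fin m → ℝ, 1 < Real.sqrt (∑ i, u i ^ 2) → ζ u = 0) (hh : 0 < h)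
    (hsmall : ∀ i, h ≤ xmax i - xmin i) (hx : ∀ i, xmin i ≤ x i ∧ x i ≤ xmax i)
    {y : Fin m → ℝ}
    (hy : y ∉ univ.pi fun j => Icc (2 * xmin j - xmax j) (2 * xmax j - xmin j)) :
    reflKer xmin xmax ζ h 0 x y = 0 := by
  simp only [mem_univ_pi, mem_Icc, not_forall, not_and, not_le] at hy
  obtain ⟨j, hj⟩ := hy
  refine reflKer_zero_eq_zero xmin xmax x hζ hh (j := j) (lt_abs.mpr ?_)
  have := hx j
  have := hsmall j
  by_cases hlow : 2 * xmin j - xmax j ≤ y j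
  · exact Or.inr (by linarith [hj hlow])
  · exact Or.inl (by linarith)

lemma integral_reflKer_zero (hh : 0 < h) :
    ∫ y, reflKer xmin xmax ζ h 0 x y = ∫ u, ζ u := by
  simp only [reflKer_zero_eq]
  rw [integral_const_mul, integral_sub_left_eq_self (fun u => ζ (h⁻¹ • u)),
    Measure.integral_comp_inv_smul, Module.finrank_fin_fun, abs_of_pos (pow_pos hh m),
    smul_eq_mul, inv_mul_cancel_left₀ (pow_pos hh m).ne']

lemma setIntegral_reflKer (hζ : Integrable ζ) (hh : h ≠ 0) (hle : ∀ j, xmin j ≤ xmax j)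
    {k : ℕ} (hk : k ≤ m) (I : Fin m → Set ℝ) (hI : ∀ j, MeasurableSet (I j))
    (hIk : ∀ j : Fin m, (j : ℕ) < k → I j = Icc (xmin j) (xmax j)) :
    ∫ y in univ.pi I, reflKer xmin xmax ζ h k x y
      = ∫ y in univ.pi fun j : Fin m =>
          if (j : ℕ) < k then Icc (2 * xmin j - xmax j) (2 * xmax j - xmin j) else I j,
        reflKer xmin xmax ζ h 0 x y := by
  induction k generalizing I with
  | zero => simp
  | succ k ih =>
    have hk' : k < m := hk
    set j₀ : Fin m := ⟨k, hk'⟩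
    set J := update I j₀ (Icc (2 * xmin j₀ - xmax j₀) (2 * xmax j₀ - xmin j₀))
    have hIJ : I = update I j₀ (Icc (xmin j₀) (xmax j₀)) := by
      rw [← hIk j₀ (Nat.lt_succ_self k), update_eq_self]
    have hJ : ∀ j, MeasurableSet (J j) := by
      intro j
      rcases eq_or_ne j j₀ with rfl | hj
      · simp [J]
      · simpa [J, hj] using hI j
    have hJk : ∀ j : Fin m, (j : ℕ) < k → J j = Icc (xmin j) (xmax j) := fun j hj => by
      rw [← hIk j (Nat.lt_succ_of_lt hj)]
      exact update_of_ne (Fin.ne_of_lt hj) _ _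
    calc ∫ y in univ.pi I, reflKer xmin xmax ζ h (k + 1) x y
        = ∫ y in univ.pi J, reflKer xmin xmax ζ h k x y := by
          simp only [reflKer_succ xmin xmax ζ h x hk']
          conv_lhs => rw [hIJ]
          exact setIntegral_add_reflectCoord (integrable_reflKer xmin xmax x hζ hh k) hI j₀
            (hle j₀)
      _ = _ := by
          rw [ih hk'.le J hJ hJk]
          congr
          funext j
          rcases eq_or_ne j j₀ with rfl | hj
          · simp [J, j₀]
          · have : (j : ℕ) ≠ k := fun h => hj (Fin.ext h)
            simp only [J, update_of_ne hj, Nat.lt_succ_iff_lt_or_eq, this, or_false]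

end ReflectedKernel

theorem stmt_11_general {m : ℕ} (xmin xmax : Fin m → ℝ)
    (ζ : (Fin m → ℝ) → ℝ)
    (hζsupp : ∀ u : Fin m → ℝ, 1 < Real.sqrt (∑ i, u i ^ 2) → ζ u = 0)
    (hζint : ∫ u : Fin m → ℝ, ζ u ∂volume = 1)
    (h : ℝ) (hh : 0 < h) (hsmall : ∀ i, h ≤ xmax i - xmin i)
    (x : Fin m → ℝ) (hx : ∀ i, xmin i ≤ x i ∧ x i ≤ xmax i) :
    ∫ y in {y : Fin m → ℝ | ∀ i, xmin i ≤ y i ∧ y i ≤ xmax i},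
      reflKer xmin xmax ζ h m x y ∂volume = 1 := by
  have hζ : Integrable ζ := by
    by_contra hζ
    rw [integral_undef hζ] at hζint
    exact zero_ne_one hζint
  have hle : ∀ j, xmin j ≤ xmax j := fun j => by linarith [hsmall j]
  have hP : {y : Fin m → ℝ | ∀ i, xmin i ≤ y i ∧ y i ≤ xmax i}
      = univ.pi fun j => Icc (xmin j) (xmax j) := by
    ext y
    simp only [mem_ofPred_eq, mem_univ_pi, mem_Icc]
  rw [hP, ReflectedKernel.setIntegral_reflKer xmin xmax x hζ hh.ne' hle le_rfl _
    (fun _ => measurableSet_Icc) fun _ _ => rfl]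
  simp only [Fin.is_lt, if_true]
  rw [setIntegral_eq_integral_of_forall_compl_eq_zero fun y hy =>
      ReflectedKernel.reflKer_zero_eq_zero_of_notMem xmin xmax x hζsupp hh hsmall hx hy,
    ReflectedKernel.integral_reflKer_zero xmin xmax x hh, hζint]

/-- the reflected kernel integrates to one over the hypercube:
if `ζ` is supported in the closed unit ball with `∫ ζ = 1` and
`0 < h ≤ min_i (xmax i − xmin i)`, then `∫_P ζ̃_h(x; y) dy = 1` for every `x ∈ P`. -/
theorem stmt_11 {m : ℕ} (xmin xmax : Fin m → ℝ)
    (ζ : (Fin m → ℝ) → ℝ) (hζnonneg : ∀ u, 0 ≤ ζ u)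
    (hζsupp : ∀ u : Fin m → ℝ, 1 < Real.sqrt (∑ i, u i ^ 2) → ζ u = 0)
    (hζint : ∫ u : Fin m → ℝ, ζ u ∂volume = 1)
    (h : ℝ) (hh : 0 < h) (hsmall : ∀ i, h ≤ xmax i - xmin i)
    (x : Fin m → ℝ) (hx : ∀ i, xmin i ≤ x i ∧ x i ≤ xmax i) :
    ∫ y in {y : Fin m → ℝ | ∀ i, xmin i ≤ y i ∧ y i ≤ xmax i},
      reflKer xmin xmax ζ h m x y ∂volume = 1 :=
  stmt_11_general xmin xmax ζ hζsupp hζint h hh hsmall x hx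
end

section
/- Let T : ℝ^m → ℝ^n (m ≤ n) be an injective linear map, x₀ ∈ ℝ^m, and δ > 0. Then the m-dimensional Lebesgue measure of the set {x ∈ ℝ^m : ‖T x − T x₀‖ ≤ δ} equals Γ_m · δ^m / √det(TᵀT), where Γ_m is the Lebesgue measure of the unit ball in ℝ^m. -/
/-!
Composing `T` with an isometry `range T ≃ ℝ^m` gives an endomorphism `g` of `ℝ^m` with
`‖g x‖ = ‖T x‖` and `|LinearMap.det g| = normDet T = √det(TᵀT)`. The set is then the preimage under `g` of
the closed ball of radius `δ` about `g x₀`, whose volume is `δ^m Γ_m`, and preimages under `g` scale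
volume by `|LinearMap.det g|⁻¹`.
-/

open MeasureTheory Module

namespace LinearMap

variable {E F : Type*} [NormedAddCommGroup E] [InnerProductSpace ℝ E] [FiniteDimensional ℝ E]
  [NormedAddCommGroup F] [InnerProductSpace ℝ F]

theorem exists_abs_det_eq_normDet_and_norm_eq {f : E →ₗ[ℝ] F} (hf : Function.Injective f) :
    ∃ g : E →ₗ[ℝ] E, |LinearMap.det g| = f.normDet ∧ ∀ x, ‖g x‖ = ‖f x‖ := by
  obtain ⟨b⟩ := (f.normDet_ne_zero_tfae.out 4 3).mp hf
  let e : E ≃ₗᵢ[ℝ] f.range := (stdOrthonormalBasis ℝ E).equiv b (Equiv.refl _)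
  refine ⟨e.symm.toLinearIsometry.toLinearMap ∘ₗ f.rangeRestrict, ?_, fun x => ?_⟩
  · rw [← normDet_eq_abs_det, normDet_comp_of_finrank_eq _ _ e.finrank_eq,
      LinearIsometry.normDet_eq_one, one_mul]
    exact normDet_codRestrict _
  · simp

theorem addHaar_setOf_norm_sub_le [MeasurableSpace E] [BorelSpace E] (μ : Measure E)
    [μ.IsAddHaarMeasure] {f : E →ₗ[ℝ] F} (hf : Function.Injective f) (x₀ : E) {δ : ℝ}
    (hδ : 0 ≤ δ) :
    μ {x | ‖f x - f x₀‖ ≤ δ} =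
      ENNReal.ofReal (δ ^ finrank ℝ E / f.normDet) * μ (Metric.closedBall 0 1) := by
  obtain ⟨g, hg_det, hg_norm⟩ := exists_abs_det_eq_normDet_and_norm_eq hf
  have hg : LinearMap.det g ≠ 0 := by
    rw [← abs_ne_zero, hg_det]
    exact (f.normDet_ne_zero_tfae.out 4 0).mp hf
  have hset : {x | ‖f x - f x₀‖ ≤ δ} = g ⁻¹' Metric.closedBall (g x₀) δ := by
    ext x
    simp [dist_eq_norm, ← map_sub, hg_norm]
  rw [hset, Measure.addHaar_preimage_linearMap μ hg, Measure.addHaar_closedBall' μ _ hδ,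
    ← mul_assoc, ← ENNReal.ofReal_mul (abs_nonneg _), abs_inv, hg_det, div_eq_inv_mul]

end LinearMap

theorem stmt_14_general {m n : ℕ}
    (T : EuclideanSpace ℝ (Fin m) →L[ℝ] EuclideanSpace ℝ (Fin n))
    (hT : Function.Injective T)
    (x₀ : EuclideanSpace ℝ (Fin m)) (δ : ℝ) (hδ : 0 < δ) :
    volume {x : EuclideanSpace ℝ (Fin m) | ‖T x - T x₀‖ ≤ δ} =
      ENNReal.ofReal
        ((volume (Metric.closedBall (0 : EuclideanSpace ℝ (Fin m)) 1)).toReal * δ ^ m /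
          Real.sqrt (LinearMap.det
            (((ContinuousLinearMap.adjoint T).comp T :
                EuclideanSpace ℝ (Fin m) →L[ℝ] EuclideanSpace ℝ (Fin m)) :
              EuclideanSpace ℝ (Fin m) →ₗ[ℝ] EuclideanSpace ℝ (Fin m)))) := by
  have hdet : LinearMap.det ((ContinuousLinearMap.adjoint T ∘L T :
      EuclideanSpace ℝ (Fin m) →L[ℝ] EuclideanSpace ℝ (Fin m)) :
        EuclideanSpace ℝ (Fin m) →ₗ[ℝ] EuclideanSpace ℝ (Fin m)) = T.normDet ^ 2 :=
    T.normDet_sq.symm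
  have hball : volume (Metric.closedBall (0 : EuclideanSpace ℝ (Fin m)) 1) ≠ ⊤ :=
    (isCompact_closedBall _ _).measure_lt_top.ne
  refine (LinearMap.addHaar_setOf_norm_sub_le volume (f := T.toLinearMap) hT x₀ hδ.le).trans ?_
  rw [finrank_euclideanSpace_fin, hdet, Real.sqrt_sq (LinearMap.normDet_nonneg _),
    ← ENNReal.ofReal_toReal hball,
    ← ENNReal.ofReal_mul (div_nonneg (pow_nonneg hδ.le _) (LinearMap.normDet_nonneg _)),
    ENNReal.toReal_ofReal ENNReal.toReal_nonneg]
  congr 1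
  ring

/-- the Lebesgue measure of the ellipsoid
`{x : ‖T x − T x₀‖ ≤ δ}` determined by an injective linear map `T : ℝ^m → ℝ^n` equals
`Γ_m δ^m / √det(TᵀT)`, where `Γ_m` is the volume of the unit ball in `ℝ^m`. -/
theorem stmt_14 {m n : ℕ} (hmn : m ≤ n)
    (T : EuclideanSpace ℝ (Fin m) →L[ℝ] EuclideanSpace ℝ (Fin n))
    (hT : Function.Injective T)
    (x₀ : EuclideanSpace ℝ (Fin m)) (δ : ℝ) (hδ : 0 < δ) :
    volume {x : EuclideanSpace ℝ (Fin m) | ‖T x - T x₀‖ ≤ δ} =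
      ENNReal.ofReal
        ((volume (Metric.closedBall (0 : EuclideanSpace ℝ (Fin m)) 1)).toReal * δ ^ m /
          Real.sqrt (LinearMap.det
            (((ContinuousLinearMap.adjoint T).comp T :
                EuclideanSpace ℝ (Fin m) →L[ℝ] EuclideanSpace ℝ (Fin m)) :
              EuclideanSpace ℝ (Fin m) →ₗ[ℝ] EuclideanSpace ℝ (Fin m)))) :=
  stmt_14_general T hT x₀ δ hδ
end
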